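/- arXiv:1305.1040 — 8 statements merged into one kernel-verified Lean document; each statement's English description precedes it below -/
import Mathlib

section
/- In one dimension, suppose x_j^{(t)} ≤ 0 and x_k^{(t)} > 0 for all k ≠ j, j', where x_{j'} is strictly between x_j and the other points, so that ‖x_j^{(t)} - x_k^{(t)}‖ > ‖x_{j'}^{(t)} - x_k^{(t)}‖ for all k ≠ j, j', and w_j ≥ w_{j'}. If the updated value of x_{j'}, namely (Σ_k f(x_{j'}^{(t)} - x_k^{(t)}) w_k x_k^{(t)}) / (Σ_k f(x_{j'}^{(t)} - x_k^{(t)}) w_k), is ≤ 0, then it is greater than or equal to the updated value of x_j. In particular the updated x_{j'} cannot become a strictly smaller (new) minimum vertex than the updated x_j. -/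
theorem stmt_4 (N : ℕ) (f : ℝ → ℝ) (g : ℝ → ℝ)
    (hf01 : ∀ u, 0 ≤ f u ∧ f u ≤ 1) (hf1 : ∀ u, f u = 1 ↔ u = 0)
    (hradial : ∀ u, f u = g |u|) (hmono : ∀ r s : ℝ, 0 ≤ r → r ≤ s → g s ≤ g r)
    (hstrict : ∀ r s : ℝ, 0 ≤ r → r < s → 0 < g s → g s < g r)
    (w : Fin N → ℝ) (hw : ∀ k, 0 < w k)
    (x : Fin N → ℝ) (j j' : Fin N) (hjj' : j ≠ j')
    (hxj : x j ≤ 0) (hxk : ∀ k, k ≠ j → k ≠ j' → 0 < x k)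
    (hbetween : x j < x j' ∧ ∀ k, k ≠ j → k ≠ j' → x j' < x k)
    (hfar : ∀ k, k ≠ j → k ≠ j' → |x j - x k| > |x j' - x k|)
    (hwj : w j' ≤ w j)
    (hneg : (∑ k, f (x j' - x k) * w k)⁻¹ * (∑ k, f (x j' - x k) * w k * x k) ≤ 0) :
    (∑ k, f (x j - x k) * w k)⁻¹ * (∑ k, f (x j - x k) * w k * x k) ≤
      (∑ k, f (x j' - x k) * w k)⁻¹ * (∑ k, f (x j' - x k) * w k * x k) := by
  obtain ⟨hjlt, hbet⟩ := hbetween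
  have hf0 : f 0 = 1 := (hf1 0).mpr rfl
  have hfnn : ∀ u, 0 ≤ f u := fun u => (hf01 u).1
  have hfle : ∀ u, f u ≤ 1 := fun u => (hf01 u).2
  have hcsymm : f (x j' - x j) = f (x j - x j') := by
    rw [hradial, hradial, abs_sub_comm]
  have hc0 : 0 ≤ f (x j - x j') := hfnn _
  have hc1 : f (x j - x j') ≤ 1 := hfle _
  have hApos : 0 < ∑ k, f (x j - x k) * w k :=
    Finset.sum_pos' (fun k _ => mul_nonneg (hfnn _) (hw k).le)
      ⟨j, Finset.mem_univ j, by simpa [sub_self, hf0] using hw j⟩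
  have hBpos : 0 < ∑ k, f (x j' - x k) * w k :=
    Finset.sum_pos' (fun k _ => mul_nonneg (hfnn _) (hw k).le)
      ⟨j', Finset.mem_univ j', by simpa [sub_self, hf0] using hw j'⟩
  set R : ℝ := (∑ k, f (x j' - x k) * w k)⁻¹ * (∑ k, f (x j' - x k) * w k * x k) with hRdef
  have hRB : R * (∑ k, f (x j' - x k) * w k) = ∑ k, f (x j' - x k) * w k * x k := by
    rw [hRdef, mul_comm, ← mul_assoc, mul_inv_cancel₀ hBpos.ne', one_mul]
  have hRneg : R ≤ 0 := hneg
  have hxjR : x j ≤ R := by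
    have h1 : x j * (∑ k, f (x j' - x k) * w k) ≤ ∑ k, f (x j' - x k) * w k * x k := by
      rw [Finset.mul_sum]
      apply Finset.sum_le_sum
      intro k _
      have hbk : 0 ≤ f (x j' - x k) * w k := mul_nonneg (hfnn _) (hw k).le
      have hxk' : x j ≤ x k := by
        rcases eq_or_ne k j with rfl | hkj
        · exact le_refl _
        · rcases eq_or_ne k j' with rfl | hkj'
          · exact hjlt.le
          · exact (lt_trans hjlt (hbet k hkj hkj')).le
      nlinarith [mul_le_mul_of_nonneg_left hxk' hbk]
    have := hRB
    nlinarith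
  set C : ℝ := (1 - f (x j - x j')) * w j' * (x j - R) with hCdef
  have key : ∀ k, (f (x j - x k) * w k - f (x j' - x k) * w k) * (x k - R)
      ≤ (if k = j then C else 0) + (if k = j' then -C else 0) := by
    intro k
    rcases eq_or_ne k j with rfl | hkj
    · rw [if_pos rfl, if_neg hjj', add_zero, sub_self, hf0, hcsymm, hCdef]
      nlinarith [mul_nonneg (mul_nonneg (sub_nonneg.2 hc1) (sub_nonneg.2 hwj))
        (sub_nonneg.2 hxjR)]
    · rcases eq_or_ne k j' with rfl | hkj'
      · rw [if_neg hkj, if_pos rfl, zero_add, sub_self, hf0, hCdef]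
        nlinarith [mul_nonneg (mul_nonneg (sub_nonneg.2 hc1) (hw k).le)
          (sub_nonneg.2 hjlt.le)]
      · rw [if_neg hkj, if_neg hkj', add_zero]
        have hab : f (x j - x k) ≤ f (x j' - x k) := by
          rw [hradial, hradial]
          exact hmono _ _ (abs_nonneg _) (le_of_lt (hfar k hkj hkj'))
        have hxkR : R ≤ x k := hRneg.trans (hxk k hkj hkj').le
        nlinarith [mul_nonneg (mul_nonneg (sub_nonneg.2 hab) (hw k).le)
          (sub_nonneg.2 hxkR)]
  have hsum : ∑ k, (f (x j - x k) * w k - f (x j' - x k) * w k) * (x k - R) ≤ 0 := by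
    calc ∑ k, (f (x j - x k) * w k - f (x j' - x k) * w k) * (x k - R)
        ≤ ∑ k, ((if k = j then C else 0) + (if k = j' then -C else 0)) :=
          Finset.sum_le_sum fun k _ => key k
      _ = 0 := by
          rw [Finset.sum_add_distrib]
          simp
  have hexp : ∑ k, (f (x j - x k) * w k - f (x j' - x k) * w k) * (x k - R)
      = ((∑ k, f (x j - x k) * w k * x k) - R * (∑ k, f (x j - x k) * w k))
        - ((∑ k, f (x j' - x k) * w k * x k) - R * (∑ k, f (x j' - x k) * w k)) := by
    rw [Finset.mul_sum, Finset.mul_sum, ← Finset.sum_sub_distrib, ← Finset.sum_sub_distrib,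
      ← Finset.sum_sub_distrib]
    exact Finset.sum_congr rfl fun k _ => by ring
  have hfinal : (∑ k, f (x j - x k) * w k * x k) ≤ R * (∑ k, f (x j - x k) * w k) := by
    rw [hexp] at hsum
    linarith [hRB]
  have h2 : (∑ k, f (x j - x k) * w k)⁻¹ * (∑ k, f (x j - x k) * w k * x k)
      ≤ (∑ k, f (x j - x k) * w k)⁻¹ * (R * (∑ k, f (x j - x k) * w k)) :=
    mul_le_mul_of_nonneg_left hfinal (inv_nonneg.2 hApos.le)
  calc (∑ k, f (x j - x k) * w k)⁻¹ * (∑ k, f (x j - x k) * w k * x k)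
      ≤ (∑ k, f (x j - x k) * w k)⁻¹ * (R * (∑ k, f (x j - x k) * w k)) := h2
    _ = R := by
        rw [mul_comm R, ← mul_assoc, inv_mul_cancel₀ hApos.ne', one_mul]
end

section
/- There exists a configuration of three points on the real line, a PDD-like influence function f, and a sequence of weight functions w^{(t)} (changing over iterations) such that the blurring mean-shift process with time-varying weights does not converge: in particular one point's iterates alternate in sign with absolute value bounded away from zero. -/
/-!
Keep the outer points symmetric at `±b_t`, `b_t = 1/2 + β_t` with `β_t = 2⁻ᵗ / 8`, so that they
never see each other through the kernel but both see the middle point `a_t`. Given the target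
`b_{t+1}`, the weights of `±b_t` are the unique ones (up to scale) moving the outer points there,
and with them the middle point goes to `a_t (b_t - 2 b_{t+1}) / (2 b_t - b_{t+1}) = -a_t / (1 + 3 β_t)`.
So the middle point changes sign at every step, while its modulus only shrinks by the convergent
product `∏ (1 + 3 β_t)` and stays above `1/24`; such a sequence cannot converge.
-/

open Filter Topology

theorem not_tendsto_of_abs_ge_of_pos_iff_even {u : ℕ → ℝ} {ε : ℝ} (hε : 0 < ε)
    (habs : ∀ t, ε ≤ |u t|) (hsign : ∀ t, 0 < u t ↔ Even t) (l : ℝ) :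
    ¬ Tendsto u atTop (𝓝 l) := by
  intro hl
  have h_even : ∀ t, ε ≤ u (2 * t) := fun t => by
    have hpos := (hsign (2 * t)).2 (even_two_mul t)
    simpa [abs_of_pos hpos] using habs (2 * t)
  have h_odd : ∀ t, u (2 * t + 1) ≤ -ε := fun t => by
    have hnpos : ¬ 0 < u (2 * t + 1) := by simp [hsign]
    have := habs (2 * t + 1)
    rw [abs_of_nonpos (not_lt.1 hnpos)] at this
    linarith
  have hl_ge : ε ≤ l :=
    ge_of_tendsto' (hl.comp (tendsto_atTop_mono (fun t => show t ≤ 2 * t by omega) tendsto_id))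
      h_even
  have hl_le : l ≤ -ε :=
    le_of_tendsto' (hl.comp (tendsto_atTop_mono (fun t => show t ≤ 2 * t + 1 by omega)
      tendsto_id)) h_odd
  linarith

noncomputable def blurStep {ι : Type*} [Fintype ι] (f w : ℝ → ℝ) (x : ι → ℝ) (i : ι) : ℝ :=
  (∑ k, f |x k - x i| * w (x k))⁻¹ * ∑ j, f |x j - x i| * w (x j) * x j

noncomputable def pddKernel (d : ℝ) : ℝ := if d = 0 then 1 else if d < 1 then 1 / 2 else 0

theorem pddKernel_zero : pddKernel 0 = 1 := if_pos rfl

theorem pddKernel_of_pos_of_lt_one {d : ℝ} (h₀ : 0 < d) (h₁ : d < 1) : pddKernel d = 1 / 2 := by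
  rw [pddKernel, if_neg h₀.ne', if_pos h₁]

theorem pddKernel_of_one_lt {d : ℝ} (h : 1 < d) : pddKernel d = 0 := by
  rw [pddKernel, if_neg (by linarith), if_neg (by linarith)]

def symConfig (a b : ℝ) : Fin 3 → ℝ := ![a, b, -b]

/-- Weights are only relevant up to a common factor; these are tuned so that the outer points of
`symConfig a b` land exactly on `±b'`. -/
noncomputable def stepWeight (a b b' y : ℝ) : ℝ :=
  if y = b then b' - a else if y = -b then b' + a else 2 * (b - b')

theorem stepWeight_pos {a b b' : ℝ} (ha : |a| < b') (hb : b' < b) (y : ℝ) :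
    0 < stepWeight a b b' y := by
  have := abs_lt.1 ha
  unfold stepWeight
  split_ifs <;> linarith

theorem blurStep_symConfig {a b b' : ℝ} (ha : |a| < b') (hb : b' < b) (hb₁ : b + |a| < 1)
    (hb₂ : 1 < 2 * b) :
    blurStep pddKernel (stepWeight a b b') (symConfig a b) =
      symConfig (a * (b - 2 * b') / (2 * b - b')) b' := by
  obtain ⟨ha₁, ha₂⟩ := abs_lt.1 ha
  have k_ab : pddKernel |b - a| = 1 / 2 := by
    rw [abs_of_pos (by linarith)]
    exact pddKernel_of_pos_of_lt_one (by linarith) (by linarith [neg_abs_le a])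
  have k_ac : pddKernel |-b - a| = 1 / 2 := by
    rw [abs_of_neg (by linarith)]
    exact pddKernel_of_pos_of_lt_one (by linarith) (by linarith [le_abs_self a])
  have k_bc : pddKernel |-b - b| = 0 := by
    rw [abs_of_neg (by linarith)]; exact pddKernel_of_one_lt (by linarith)
  have w_a : stepWeight a b b' a = 2 * (b - b') := by
    rw [stepWeight, if_neg (by linarith), if_neg (by linarith)]
  have w_b : stepWeight a b b' b = b' - a := if_pos rfl
  have w_c : stepWeight a b b' (-b) = b' + a := by
    rw [stepWeight, if_neg (by linarith), if_pos rfl]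
  have h₀ : 2 * b - b' ≠ 0 := by linarith
  funext i
  fin_cases i <;>
    simp only [blurStep, symConfig, Fin.sum_univ_three, Fin.zero_eta, Fin.mk_one, Fin.reduceFinMk,
      Fin.isValue, Matrix.cons_val_zero, Matrix.cons_val_one, Matrix.cons_val_two,
      Matrix.head_cons, Matrix.tail_cons, sub_self, abs_zero, pddKernel_zero, abs_sub_comm a,
      abs_sub_comm b (-b), k_ab, k_ac, k_bc, w_a, w_b, w_c] <;>
    rw [inv_mul_eq_div, div_eq_iff (ne_of_gt (by linarith))] <;>
    field_simp <;> ring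

namespace BlurringCounterexample

noncomputable def shift (t : ℕ) : ℝ := (1 / 2) ^ t / 8

noncomputable def outer (t : ℕ) : ℝ := 1 / 2 + shift t

noncomputable def middleAbs : ℕ → ℝ
  | 0 => 1 / 8
  | t + 1 => middleAbs t / (1 + 3 * shift t)

noncomputable def middle (t : ℕ) : ℝ := (-1) ^ t * middleAbs t

noncomputable def orbit (t : ℕ) : Fin 3 → ℝ := symConfig (middle t) (outer t)

noncomputable def weight (t : ℕ) : ℝ → ℝ := stepWeight (middle t) (outer t) (outer (t + 1))

theorem shift_pos (t : ℕ) : 0 < shift t := by unfold shift; positivity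

theorem shift_le (t : ℕ) : shift t ≤ 1 / 8 := by
  unfold shift
  linarith [pow_le_one₀ (by norm_num : (0 : ℝ) ≤ 1 / 2) (by norm_num) (n := t)]

theorem shift_succ (t : ℕ) : shift (t + 1) = shift t / 2 := by
  unfold shift; ring

theorem middleAbs_le (t : ℕ) : middleAbs t ≤ 1 / 8 := by
  induction t with
  | zero => exact le_rfl
  | succ t ih =>
    have := shift_pos t
    rw [middleAbs, div_le_iff₀ (by linarith)]
    nlinarith

/-- Since `∑ shift t < ∞`, the contraction factors `1 + 3 * shift t` have a convergent product;
this is its quantitative form. -/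
theorem le_middleAbs (t : ℕ) : (1 + 16 * shift t) / 24 ≤ middleAbs t := by
  induction t with
  | zero => norm_num [shift, middleAbs]
  | succ t ih =>
    have := shift_pos t
    have := shift_le t
    rw [middleAbs, le_div_iff₀ (by linarith), shift_succ]
    nlinarith

theorem middle_succ (t : ℕ) :
    middle (t + 1) = middle t * (outer t - 2 * outer (t + 1)) / (2 * outer t - outer (t + 1)) := by
  have h_num : outer t - 2 * outer (t + 1) = -(1 / 2) := by
    simp only [outer, shift_succ]; ring
  have h_den : 2 * outer t - outer (t + 1) = (1 + 3 * shift t) / 2 := by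
    simp only [outer, shift_succ]; ring
  have : 1 + 3 * shift t ≠ 0 := by linarith [shift_pos t]
  rw [h_num, h_den, middle, middle, middleAbs, pow_succ]
  field_simp

theorem abs_middle (t : ℕ) : |middle t| = middleAbs t := by
  rw [middle, abs_mul, abs_pow, abs_neg, abs_one, one_pow, one_mul,
    abs_of_pos (by linarith [le_middleAbs t, shift_pos t])]

theorem le_abs_middle (t : ℕ) : 1 / 24 ≤ |middle t| := by
  rw [abs_middle]; linarith [le_middleAbs t, shift_pos t]

theorem middle_pos_iff (t : ℕ) : 0 < middle t ↔ Even t := by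
  have := le_middleAbs t
  have := shift_pos t
  rcases Nat.even_or_odd t with h | h
  · simp only [middle, h.neg_one_pow, one_mul, h, iff_true]; linarith
  · simp only [middle, h.neg_one_pow, neg_one_mul, Left.neg_pos_iff, Nat.not_even_iff_odd.2 h,
      iff_false, not_lt]; linarith

theorem orbit_succ (t : ℕ) : orbit (t + 1) = blurStep pddKernel (weight t) (orbit t) := by
  have h_middle := abs_middle t ▸ middleAbs_le t
  have := shift_pos t
  have := shift_le t
  have := shift_succ t
  rw [orbit, orbit, weight, blurStep_symConfig, middle_succ] <;> simp only [outer] <;> linarith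

theorem weight_pos (t : ℕ) (y : ℝ) : 0 < weight t y := by
  have h_middle := abs_middle t ▸ middleAbs_le t
  have := shift_pos t
  have := shift_pos (t + 1)
  have := shift_succ t
  exact stepWeight_pos (by simp only [outer]; linarith) (by simp only [outer]; linarith) y

end BlurringCounterexample

open BlurringCounterexample in
theorem stmt_5 :
    ∃ (x : ℕ → Fin 3 → ℝ) (f : ℝ → ℝ) (w : ℕ → ℝ → ℝ) (δ : Fin 3 → ℝ),
      (∀ i, 0 < δ i ∧ δ i < 1 / 4) ∧
      x 0 0 = δ 0 ∧ x 0 1 = 1 / 2 + δ 1 ∧ x 0 2 = -(1 / 2) - δ 2 ∧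
      f 0 = 1 ∧ (∀ d : ℝ, 0 < d → d < 1 → f d = 1 / 2) ∧ (∀ d : ℝ, 1 < d → f d = 0) ∧
      (∀ t y, 0 < w t y) ∧
      (∀ t i, x (t + 1) i =
        (∑ k, f |x t k - x t i| * w t (x t k))⁻¹ *
          ∑ j, f |x t j - x t i| * w t (x t j) * x t j) ∧
      (∃ ε > 0, ∀ t, ε ≤ |x t 0| ∧ (0 < x t 0 ↔ Even t)) ∧
      ¬ ∃ l : ℝ, Tendsto (fun t => x t 0) atTop (nhds l) := by
  have h_sep : ∀ t, 1 / 24 ≤ |orbit t 0| ∧ (0 < orbit t 0 ↔ Even t) := fun t =>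
    ⟨le_abs_middle t, middle_pos_iff t⟩
  refine ⟨orbit, pddKernel, weight, fun _ => 1 / 8, fun _ => by norm_num, ?_, ?_, ?_,
    pddKernel_zero, fun _ => pddKernel_of_pos_of_lt_one, fun _ => pddKernel_of_one_lt, weight_pos,
    fun t i => congrFun (orbit_succ t) i, ⟨1 / 24, by norm_num, h_sep⟩, ?_⟩
  · norm_num [orbit, symConfig, middle, middleAbs]
  · norm_num [orbit, symConfig, outer, shift]
  · norm_num [orbit, symConfig, outer, shift, Matrix.cons_val_two, Matrix.tail_cons,
      Matrix.head_cons]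
  · rintro ⟨l, hl⟩
    exact not_tendsto_of_abs_ge_of_pos_iff_even (by norm_num) (fun t => (h_sep t).1)
      (fun t => (h_sep t).2) l hl
end

section
/- Blurring mean-shift convergence theorem: if f is PDD and the weights w_j > 0 are fixed (depending only on the point index j), then for the blurring mean-shift update there exist limit points x_1*, ..., x_N* such that x_i^{(t)} → x_i* as t → ∞ for every i. -/
/-!
Along the blurring mean-shift iteration the pair energy `∑ i j, w i * w j * Φ (‖x i - x j‖²)`,
with `Φ s = ∫₀ˢ g (√u) du` concave, drops by at least `4 ∑ i, w i² ‖x' i - x i‖²` per step, so the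
steps tend to zero. Each coordinate evolves by a row-stochastic matrix with diagonal at least `ε`
and `a j i ≤ ε⁻² a i j` (type-symmetric in the sense of Hendrickx and Tsitsiklis). For such
dynamics, with the coordinate sorted as `ζ 0 ≤ ζ 1 ≤ ⋯`, every truncated sum `∑ k < m, r ^ k ζ k`
is nondecreasing once `r` is small, so it converges, and hence so does every sorted value. A point
that moves by vanishing steps among finitely many convergent tracks ends up following one of them.
-/

open Filter Finset Topology Matrix

theorem Monotone.exists_eq_add_sum_ite {N : ℕ} {y : Fin N → ℝ} (hy : Monotone y) :
    ∃ b : ℝ, ∃ γ : ℕ → ℝ, (∀ g, 0 ≤ γ g) ∧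
      ∀ j : Fin N, y j = b + ∑ g ∈ range N, if g < (j : ℕ) then γ g else 0 := by
  cases N with
  | zero => exact ⟨0, 0, fun _ => le_rfl, fun j => j.elim0⟩
  | succ n =>
    let F : ℕ → ℝ := fun k => y ⟨min k n, by omega⟩
    refine ⟨F 0, fun g => F (g + 1) - F g, fun g => sub_nonneg.2 (hy (by simp)),
      fun j => ?_⟩
    have hrange : (range (n + 1)).filter (· < (j : ℕ)) = range j := by
      ext g; simp only [mem_filter, mem_range]; omega
    rw [← sum_filter, hrange, sum_range_sub, add_sub_cancel]
    exact congrArg y (Fin.ext (by simp; omega))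

theorem sum_mul_nonneg_of_monotone {N : ℕ} {M y : Fin N → ℝ} (hy : Monotone y)
    (hM : ∑ j, M j = 0) (htail : ∀ g : ℕ, 0 ≤ ∑ j ∈ univ.filter (fun j : Fin N => g < j), M j) :
    0 ≤ ∑ j, M j * y j := by
  obtain ⟨b, γ, hγ, hyeq⟩ := hy.exists_eq_add_sum_ite
  have habel : ∑ j, M j * y j =
      b * ∑ j, M j + ∑ g ∈ range N, γ g * ∑ j ∈ univ.filter (fun j : Fin N => g < j), M j := by
    simp only [hyeq, mul_add, sum_add_distrib, mul_sum, sum_filter]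
    rw [sum_comm]
    congr 1
    · exact sum_congr rfl fun j _ => mul_comm _ _
    · exact sum_congr rfl fun g _ => sum_congr rfl fun j _ => by split_ifs <;> ring
  rw [habel, hM, mul_zero, zero_add]
  exact sum_nonneg fun g _ => mul_nonneg (hγ g) (htail g)

structure Matrix.IsTypeSymmetricStochastic {ι : Type*} [Fintype ι] [DecidableEq ι]
    (δ K : ℝ) (A : Matrix ι ι ℝ) : Prop where
  mem_rowStochastic : A ∈ rowStochastic ℝ ι
  le_diag : ∀ i, δ ≤ A i i
  le_mul_swap : ∀ i j, A j i ≤ K * A i j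

namespace Matrix.IsTypeSymmetricStochastic

variable {ι : Type*} [Fintype ι] [DecidableEq ι] {δ K : ℝ} {A : Matrix ι ι ℝ}

lemma nonneg (hA : IsTypeSymmetricStochastic δ K A) (i j : ι) : 0 ≤ A i j :=
  nonneg_of_mem_rowStochastic hA.mem_rowStochastic

lemma sum_row (hA : IsTypeSymmetricStochastic δ K A) (i : ι) : ∑ j, A i j = 1 :=
  sum_row_of_mem_rowStochastic hA.mem_rowStochastic i

lemma sum_le_one (hA : IsTypeSymmetricStochastic δ K A) (i : ι) (s : Finset ι) :
    ∑ j ∈ s, A i j ≤ 1 :=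
  hA.sum_row i ▸ sum_le_sum_of_subset_of_nonneg (subset_univ s) fun j _ _ => hA.nonneg i j

lemma one_le (hA : IsTypeSymmetricStochastic δ K A) (hδ : 0 < δ) (i : ι) : 1 ≤ K :=
  le_of_mul_le_mul_right (by simpa using hA.le_mul_swap i i) (hδ.trans_le (hA.le_diag i))

lemma submatrix (hA : IsTypeSymmetricStochastic δ K A) (σ : Equiv.Perm ι) :
    IsTypeSymmetricStochastic δ K (A.submatrix σ σ) :=
  ⟨reindex_mem_rowStochastic (e₁ := σ.symm) (e₂ := σ.symm) hA.mem_rowStochastic,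
    fun i => hA.le_diag (σ i), fun i j => hA.le_mul_swap (σ i) (σ j)⟩

lemma sum_mul_sum_compl_le_of_forall_notMem (hA : IsTypeSymmetricStochastic δ K A)
    {π : Equiv.Perm ι} {T : Finset ι} (hπ : ∀ k ∉ T, π k ∉ T) {c : ι → ℝ} {α β : ℝ}
    (hα : ∀ k ∉ T, α ≤ c k) (hβ : ∀ k ∈ T, c k ≤ β) (hβ0 : 0 ≤ β) (hβK : β * K ≤ α) :
    ∑ k ∈ T, c k * ∑ j ∈ Tᶜ, A (π k) j ≤ ∑ k ∈ Tᶜ, c k * ∑ j ∈ T, A (π k) j := by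
  have hπTc : ∀ k, k ∈ Tᶜ ↔ π k ∈ Tᶜ := by
    have hmap : Tᶜ.map π.toEmbedding = Tᶜ := map_eq_of_subset fun j hj => by
      obtain ⟨k, hk, rfl⟩ := mem_map.1 hj
      exact mem_compl.2 (hπ k (mem_compl.1 hk))
    intro k
    rw [← mem_map' π.toEmbedding, hmap]
    rfl
  have hπT : ∀ k, k ∈ T ↔ π k ∈ T := fun k => by
    simpa only [mem_compl, not_iff_not] using hπTc k
  have hcross : ∑ s ∈ T, ∑ j ∈ Tᶜ, A s j ≤ K * ∑ s ∈ Tᶜ, ∑ j ∈ T, A s j :=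
    calc ∑ s ∈ T, ∑ j ∈ Tᶜ, A s j ≤ ∑ s ∈ T, ∑ j ∈ Tᶜ, K * A j s :=
          sum_le_sum fun s _ => sum_le_sum fun j _ => hA.le_mul_swap j s
      _ = K * ∑ s ∈ Tᶜ, ∑ j ∈ T, A s j := by rw [sum_comm]; simp only [mul_sum]
  have hrow : ∀ s (S : Finset ι), 0 ≤ ∑ j ∈ S, A s j := fun s S =>
    sum_nonneg fun j _ => hA.nonneg s j
  calc ∑ k ∈ T, c k * ∑ j ∈ Tᶜ, A (π k) j
      ≤ ∑ k ∈ T, β * ∑ j ∈ Tᶜ, A (π k) j :=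
        sum_le_sum fun k hk => mul_le_mul_of_nonneg_right (hβ k hk) (hrow _ _)
    _ = β * ∑ s ∈ T, ∑ j ∈ Tᶜ, A s j := by
        rw [← mul_sum]; congr 1; exact sum_equiv π hπT fun _ _ => rfl
    _ ≤ β * K * ∑ s ∈ Tᶜ, ∑ j ∈ T, A s j := by
        rw [mul_assoc]; exact mul_le_mul_of_nonneg_left hcross hβ0
    _ ≤ α * ∑ s ∈ Tᶜ, ∑ j ∈ T, A s j :=
        mul_le_mul_of_nonneg_right hβK (sum_nonneg fun s _ => hrow s T)
    _ = ∑ k ∈ Tᶜ, α * ∑ j ∈ T, A (π k) j := by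
        rw [← mul_sum]; congr 1; exact (sum_equiv π hπTc fun _ _ => rfl).symm
    _ ≤ ∑ k ∈ Tᶜ, c k * ∑ j ∈ T, A (π k) j :=
        sum_le_sum fun k hk => mul_le_mul_of_nonneg_right (hα k (mem_compl.1 hk)) (hrow _ _)

/-- If some `k ∉ T` is sent into `T`, its diagonal weight `δ` outweighs the whole tail of `c`
on `T`; otherwise `π` preserves `T` and type-symmetry bounds the flow out of `T` by `K` times the
flow into it. -/
lemma sum_le_sum_mul_sum (hA : IsTypeSymmetricStochastic δ K A) (hδ : 0 ≤ δ)
    (π : Equiv.Perm ι) (T : Finset ι) {c : ι → ℝ} {α β : ℝ} (hc : ∀ k, 0 ≤ c k)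
    (hα : ∀ k ∉ T, α ≤ c k) (hβ : ∀ k ∈ T, c k ≤ β) (hβ0 : 0 ≤ β) (hβK : β * K ≤ α)
    (htail : ∑ k ∈ T, c k ≤ α * δ) :
    ∑ k ∈ T, c k ≤ ∑ k, c k * ∑ j ∈ T, A (π k) j := by
  have hsplit : ∀ s, ∑ j ∈ T, A s j = 1 - ∑ j ∈ Tᶜ, A s j := fun s => by
    rw [← hA.sum_row s, ← sum_add_sum_compl T]; ring
  suffices h : ∑ k ∈ T, c k * ∑ j ∈ Tᶜ, A (π k) j ≤ ∑ k ∈ Tᶜ, c k * ∑ j ∈ T, A (π k) j by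
    rw [← sum_add_sum_compl T]
    simp only [hsplit _, mul_sub, mul_one, sum_sub_distrib] at h ⊢
    linarith
  by_cases hexit : ∃ k₀ ∉ T, π k₀ ∈ T
  · obtain ⟨k₀, hk₀, hπk₀⟩ := hexit
    calc ∑ k ∈ T, c k * ∑ j ∈ Tᶜ, A (π k) j
        ≤ ∑ k ∈ T, c k :=
          sum_le_sum fun k _ => mul_le_of_le_one_right (hc k) (hA.sum_le_one _ _)
      _ ≤ c k₀ * A (π k₀) (π k₀) :=
          htail.trans (mul_le_mul (hα k₀ hk₀) (hA.le_diag _) hδ (hc k₀))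
      _ ≤ c k₀ * ∑ j ∈ T, A (π k₀) j :=
          mul_le_mul_of_nonneg_left (single_le_sum (fun j _ => hA.nonneg _ j) hπk₀) (hc k₀)
      _ ≤ ∑ k ∈ Tᶜ, c k * ∑ j ∈ T, A (π k) j :=
          single_le_sum (f := fun k => c k * ∑ j ∈ T, A (π k) j)
            (fun k _ => mul_nonneg (hc k) (sum_nonneg fun j _ => hA.nonneg _ j))
            (mem_compl.2 hk₀)
  · push Not at hexit
    exact hA.sum_mul_sum_compl_le_of_forall_notMem hexit hα hβ hβ0 hβK

end Matrix.IsTypeSymmetricStochastic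

def truncGeom (r : ℝ) (m k : ℕ) : ℝ := if k < m then r ^ k else 0

lemma truncGeom_nonneg {r : ℝ} (hr : 0 ≤ r) (m k : ℕ) : 0 ≤ truncGeom r m k := by
  unfold truncGeom; split_ifs <;> positivity

lemma truncGeom_le_one {r : ℝ} (hr0 : 0 ≤ r) (hr1 : r ≤ 1) (m k : ℕ) : truncGeom r m k ≤ 1 := by
  unfold truncGeom; split_ifs
  exacts [pow_le_one₀ hr0 hr1, zero_le_one]

lemma sum_pow_fin_filter_lt_le {N g : ℕ} {r : ℝ} (hr0 : 0 ≤ r) (hr1 : r < 1) :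
    ∑ k ∈ univ.filter (fun k : Fin N => g < k), r ^ (k : ℕ) ≤ r ^ (g + 1) / (1 - r) := by
  have hIco : (range N).filter (g < ·) = Ico (g + 1) N := by
    ext n; simp only [mem_filter, mem_range, mem_Ico]; omega
  calc ∑ k ∈ univ.filter (fun k : Fin N => g < k), r ^ (k : ℕ)
      = ∑ n ∈ Ico (g + 1) N, r ^ n := by
        rw [← hIco, sum_filter, sum_filter]
        exact Fin.sum_univ_eq_sum_range (fun n => if g < n then r ^ n else 0) N
    _ ≤ r ^ (g + 1) / (1 - r) := geom_sum_Ico_le_of_lt_one hr0 hr1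

namespace Matrix.IsTypeSymmetricStochastic

variable {N : ℕ} {δ K r : ℝ} {A : Matrix (Fin N) (Fin N) ℝ}

lemma sum_filter_truncGeom_le (hA : IsTypeSymmetricStochastic δ K A) (hδ : 0 ≤ δ)
    (hr0 : 0 < r) (hrK : r * K ≤ 1) (hrδ : r * (1 + δ) ≤ δ) (π : Equiv.Perm (Fin N)) (m g : ℕ) :
    ∑ k ∈ univ.filter (fun k : Fin N => g < k), truncGeom r m k ≤
      ∑ k : Fin N, truncGeom r m k * ∑ j ∈ univ.filter (fun j : Fin N => g < j), A (π k) j := by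
  have hr1 : r < 1 := by nlinarith
  have hc := truncGeom_nonneg hr0.le m
  by_cases hgm : g < m
  · refine hA.sum_le_sum_mul_sum hδ π _ (fun k => hc k) (α := r ^ g) (β := r ^ (g + 1))
      (fun k hk => ?_) (fun k hk => ?_) (by positivity) ?_ ?_
    · simp only [mem_filter, mem_univ, true_and, not_lt] at hk
      rw [truncGeom, if_pos (by omega)]
      exact pow_le_pow_of_le_one hr0.le hr1.le hk
    · simp only [mem_filter, mem_univ, true_and] at hk
      unfold truncGeom; split_ifs
      exacts [pow_le_pow_of_le_one hr0.le hr1.le hk, by positivity]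
    · rw [pow_succ, mul_assoc]
      exact mul_le_of_le_one_right (by positivity) hrK
    · calc ∑ k ∈ univ.filter (fun k : Fin N => g < k), truncGeom r m k
          ≤ ∑ k ∈ univ.filter (fun k : Fin N => g < k), r ^ (k : ℕ) :=
            sum_le_sum fun k _ => by unfold truncGeom; split_ifs <;> [exact le_rfl; positivity]
        _ ≤ r ^ (g + 1) / (1 - r) := sum_pow_fin_filter_lt_le hr0.le hr1
        _ ≤ r ^ g * δ := by
            rw [div_le_iff₀ (by linarith), pow_succ, mul_assoc]
            exact mul_le_mul_of_nonneg_left (by linarith) (by positivity)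
  · have hzero : ∀ k ∈ univ.filter (fun k : Fin N => g < k), truncGeom r m k = 0 := by
      intro k hk
      simp only [mem_filter, mem_univ, true_and] at hk
      rw [truncGeom, if_neg (by omega)]
    rw [sum_eq_zero hzero]
    exact sum_nonneg fun k _ => mul_nonneg (hc k) (sum_nonneg fun j _ => hA.nonneg _ j)

/-- Abel summation reduces this to the cut inequality for each upper set `{k | g < k}`. -/
lemma sum_truncGeom_mul_le (hA : IsTypeSymmetricStochastic δ K A) (hδ : 0 ≤ δ)
    (hr0 : 0 < r) (hrK : r * K ≤ 1) (hrδ : r * (1 + δ) ≤ δ) (π : Equiv.Perm (Fin N)) (m : ℕ)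
    {y : Fin N → ℝ} (hy : Monotone y) :
    ∑ k : Fin N, truncGeom r m k * y k ≤ ∑ k : Fin N, truncGeom r m k * (A *ᵥ y) (π k) := by
  set c : Fin N → ℝ := fun k => truncGeom r m k
  have hdiff : ∑ k, c k * (A *ᵥ y) (π k) - ∑ k, c k * y k =
      ∑ j, (∑ k, c k * A (π k) j - c j) * y j := by
    simp only [mulVec, dotProduct, mul_sum, sub_mul, sum_sub_distrib, sum_mul]
    rw [sum_comm]
    congr 1
    exact sum_congr rfl fun _ _ => sum_congr rfl fun _ _ => by ring
  rw [← sub_nonneg, hdiff]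
  refine sum_mul_nonneg_of_monotone hy ?_ fun g => ?_
  · rw [sum_sub_distrib, sum_comm]
    simp only [← mul_sum, hA.sum_row, mul_one, sub_self]
  · rw [sum_sub_distrib, sum_comm, sub_nonneg]
    simp only [← mul_sum]
    exact hA.sum_filter_truncGeom_le hδ hr0 hrK hrδ π m g

end Matrix.IsTypeSymmetricStochastic

lemma norm_mulVec_le_of_mem_rowStochastic {ι : Type*} [Fintype ι] [DecidableEq ι]
    {A : Matrix ι ι ℝ} (hA : A ∈ rowStochastic ℝ ι) (y : ι → ℝ) : ‖A *ᵥ y‖ ≤ ‖y‖ := by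
  refine (pi_norm_le_iff_of_nonneg (norm_nonneg y)).2 fun i => ?_
  calc ‖(A *ᵥ y) i‖ = |∑ j, A i j * y j| := rfl
    _ ≤ ∑ j, |A i j * y j| := abs_sum_le_sum_abs _ _
    _ ≤ ∑ j, A i j * ‖y‖ := sum_le_sum fun j _ => by
        rw [abs_mul, abs_of_nonneg (nonneg_of_mem_rowStochastic hA)]
        exact mul_le_mul_of_nonneg_left (norm_le_pi_norm y j) (nonneg_of_mem_rowStochastic hA)
    _ = ‖y‖ := by rw [← sum_mul, sum_row_of_mem_rowStochastic hA, one_mul]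

section LowerPotential

variable {N : ℕ}

noncomputable def lowerPotential (r : ℝ) (m : ℕ) (y : Fin N → ℝ) : ℝ :=
  ∑ k : Fin N, truncGeom r m k * y (Tuple.sort y k)

lemma lowerPotential_le_mulVec {δ K r : ℝ} {A : Matrix (Fin N) (Fin N) ℝ}
    (hA : A.IsTypeSymmetricStochastic δ K) (hδ : 0 ≤ δ) (hr0 : 0 < r) (hrK : r * K ≤ 1)
    (hrδ : r * (1 + δ) ≤ δ) (m : ℕ) (y : Fin N → ℝ) :
    lowerPotential r m y ≤ lowerPotential r m (A *ᵥ y) := by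
  set σ := Tuple.sort y
  set σ' := Tuple.sort (A *ᵥ y)
  have key := (hA.submatrix σ).sum_truncGeom_mul_le hδ hr0 hrK hrδ (σ⁻¹ * σ') m
    (Tuple.monotone_sort y)
  rw [submatrix_mulVec_equiv] at key
  simpa [lowerPotential, σ, σ', Function.comp_assoc] using key

lemma lowerPotential_succ_sub (r : ℝ) (y : Fin N → ℝ) (k : Fin N) :
    lowerPotential r (k + 1) y - lowerPotential r k y = r ^ (k : ℕ) * y (Tuple.sort y k) := by
  rw [lowerPotential, lowerPotential, ← sum_sub_distrib, sum_eq_single k]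
  · simp [truncGeom]
  · intro j _ hjk
    have hlt : (j : ℕ) < k + 1 ↔ (j : ℕ) < k := by have := Fin.val_ne_of_ne hjk; omega
    simp [truncGeom, hlt]
  · simp

lemma lowerPotential_le_norm {r : ℝ} (hr0 : 0 ≤ r) (hr1 : r ≤ 1) (m : ℕ) (y : Fin N → ℝ) :
    lowerPotential r m y ≤ N * ‖y‖ := by
  calc lowerPotential r m y ≤ ∑ _k : Fin N, ‖y‖ := sum_le_sum fun k _ => by
        calc truncGeom r m k * y (Tuple.sort y k) ≤ 1 * ‖y (Tuple.sort y k)‖ := by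
              rw [Real.norm_eq_abs]
              exact (mul_le_mul_of_nonneg_left (le_abs_self _) (truncGeom_nonneg hr0 m k)).trans
                (mul_le_mul_of_nonneg_right (truncGeom_le_one hr0 hr1 m k) (abs_nonneg _))
          _ ≤ ‖y‖ := by rw [one_mul]; exact norm_le_pi_norm y _
    _ = N * ‖y‖ := by simp

end LowerPotential

theorem exists_tendsto_of_mem_range {ι α : Type*} [Fintype ι] [MetricSpace α]
    {ζ : ℕ → ι → α} {L : ι → α} (hζ : Tendsto ζ atTop (𝓝 L)) {u : ℕ → α}
    (hu : ∀ t, u t ∈ Set.range (ζ t))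
    (hstep : Tendsto (fun t => dist (u (t + 1)) (u t)) atTop (𝓝 0)) :
    ∃ l, Tendsto u atTop (𝓝 l) := by
  choose ρ hρ using hu
  set η : ℕ → ℝ := fun t => dist (u t) (L (ρ t))
  have hη : Tendsto η atTop (𝓝 0) :=
    squeeze_zero (fun _ => dist_nonneg)
      (fun t => by simp only [η, ← hρ t]; exact dist_le_pi_dist (ζ t) L (ρ t))
      (tendsto_iff_dist_tendsto_zero.1 hζ)
  have hs : Tendsto (fun t => η (t + 1) + dist (u (t + 1)) (u t) + η t) atTop (𝓝 0) := by
    simpa using ((hη.comp (tendsto_add_atTop_nat 1)).add hstep).add hη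
  -- past this point `L (ρ t)` cannot jump between distinct limits
  have hsep : ∀ᶠ t in atTop, ∀ p : ι × ι, L p.1 ≠ L p.2 →
      η (t + 1) + dist (u (t + 1)) (u t) + η t < dist (L p.1) (L p.2) :=
    eventually_all.2 fun p => by
      by_cases h : L p.1 = L p.2
      · exact Eventually.of_forall fun _ h' => absurd h h'
      · exact (hs.eventually (gt_mem_nhds (dist_pos.2 h))).mono fun _ ht _ => ht
  obtain ⟨T, hT⟩ := eventually_atTop.1 hsep
  have hconst : ∀ t ≥ T, L (ρ t) = L (ρ T) := by
    intro t ht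
    induction t, ht using Nat.le_induction with
    | base => rfl
    | succ t ht ih =>
      rw [← ih]
      by_contra hne
      refine (hT t ht (ρ (t + 1), ρ t) hne).not_ge ?_
      calc dist (L (ρ (t + 1))) (L (ρ t))
          ≤ dist (L (ρ (t + 1))) (u (t + 1)) + dist (u (t + 1)) (u t) + dist (u t) (L (ρ t)) :=
            dist_triangle4 _ _ _ _
        _ = η (t + 1) + dist (u (t + 1)) (u t) + η t := by rw [dist_comm (L _)]
  refine ⟨L (ρ T), tendsto_iff_dist_tendsto_zero.2 (hη.congr' ?_)⟩
  filter_upwards [eventually_ge_atTop T] with t ht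
  simp only [η, hconst t ht]

theorem exists_tendsto_of_isTypeSymmetricStochastic {N : ℕ} {δ K : ℝ} (hδ : 0 < δ)
    {A : ℕ → Matrix (Fin N) (Fin N) ℝ} (hA : ∀ t, (A t).IsTypeSymmetricStochastic δ K)
    {y : ℕ → Fin N → ℝ} (hy : ∀ t, y (t + 1) = A t *ᵥ y t) (i : Fin N)
    (hstep : Tendsto (fun t => y (t + 1) i - y t i) atTop (𝓝 0)) :
    ∃ l, Tendsto (fun t => y t i) atTop (𝓝 l) := by
  have hK : 1 ≤ K := (hA 0).one_le hδ i
  set r := δ / (1 + δ + K * δ)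
  have hden : 0 < 1 + δ + K * δ := by positivity
  have hr0 : 0 < r := div_pos hδ hden
  have hr1 : r < 1 := (div_lt_one hden).2 (by nlinarith)
  have hrK : r * K ≤ 1 := by
    rw [div_mul_eq_mul_div, div_le_one hden]; nlinarith
  have hrδ : r * (1 + δ) ≤ δ := by
    rw [div_mul_eq_mul_div, div_le_iff₀ hden]
    nlinarith [mul_pos (mul_pos hδ hδ) (zero_lt_one.trans_le hK)]
  have hnorm : ∀ t, ‖y t‖ ≤ ‖y 0‖ := fun t => by
    induction t with
    | zero => exact le_rfl
    | succ t ih => exact (hy t ▸ norm_mulVec_le_of_mem_rowStochastic (hA t).1 (y t)).trans ih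
  have hV : ∀ m, ∃ V, Tendsto (fun t => lowerPotential r m (y t)) atTop (𝓝 V) := fun m =>
    ⟨_, tendsto_atTop_ciSup (monotone_nat_of_le_succ fun t => hy t ▸
        lowerPotential_le_mulVec (hA t) hδ.le hr0 hrK hrδ m (y t))
      ⟨N * ‖y 0‖, by
        rintro _ ⟨t, rfl⟩
        exact (lowerPotential_le_norm hr0.le hr1.le m (y t)).trans
          (mul_le_mul_of_nonneg_left (hnorm t) (Nat.cast_nonneg N))⟩⟩
  choose V hV using hV
  have hsorted : Tendsto (fun t => y t ∘ Tuple.sort (y t)) atTop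
      (𝓝 fun k : Fin N => (V (k + 1) - V k) / r ^ (k : ℕ)) :=
    tendsto_pi_nhds.2 fun k => (((hV (k + 1)).sub (hV k)).div_const _).congr fun t => by
      rw [lowerPotential_succ_sub, mul_div_cancel_left₀ _ (pow_ne_zero _ hr0.ne')]; rfl
  exact exists_tendsto_of_mem_range hsorted (fun t => ⟨(Tuple.sort (y t)).symm i, by simp⟩)
    (by simpa [Real.dist_eq] using hstep.abs)

lemma intervalIntegral_le_mul_sub_of_antitone {φ : ℝ → ℝ} (hφ : Antitone φ) (a b : ℝ) :
    ∫ u in a..b, φ u ≤ φ a * (b - a) := by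
  rcases le_total a b with hab | hba
  · calc ∫ u in a..b, φ u ≤ ∫ _ in a..b, φ a :=
          intervalIntegral.integral_mono_on hab hφ.intervalIntegrable intervalIntegrable_const
            fun u hu => hφ hu.1
      _ = φ a * (b - a) := by simp [mul_comm]
  · have h : ∫ _ in b..a, φ a ≤ ∫ u in b..a, φ u :=
      intervalIntegral.integral_mono_on hba intervalIntegrable_const hφ.intervalIntegrable
        fun u hu => hφ hu.2
    rw [intervalIntegral.integral_symm]
    simp only [intervalIntegral.integral_const, smul_eq_mul] at h
    linarith

lemma tendsto_nhds_zero_of_add_le {e a : ℕ → ℝ} (he : ∀ t, 0 ≤ e t) (ha : ∀ t, 0 ≤ a t)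
    (h : ∀ t, e (t + 1) + a t ≤ e t) : Tendsto a atTop (𝓝 0) := by
  refine (summable_of_sum_range_le ha (c := e 0) fun n => ?_).tendsto_atTop_zero
  calc ∑ t ∈ range n, a t ≤ ∑ t ∈ range n, (e t - e (t + 1)) :=
        sum_le_sum fun t _ => by linarith [h t]
    _ = e 0 - e n := sum_range_sub' e n
    _ ≤ e 0 := by linarith [he n]

section Energy

open RealInnerProductSpace

variable {ι E : Type*} [Fintype ι] [NormedAddCommGroup E]

noncomputable def pairEnergy (φ : ℝ → ℝ) (w : ι → ℝ) (x : ι → E) : ℝ :=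
  ∑ i, ∑ j, w i * w j * ∫ u in (0 : ℝ)..‖x i - x j‖ ^ 2, φ u

lemma pairEnergy_nonneg {φ : ℝ → ℝ} {w : ι → ℝ} (hφ0 : ∀ s, 0 ≤ φ s) (hw : ∀ i, 0 ≤ w i)
    (x : ι → E) : 0 ≤ pairEnergy φ w x :=
  sum_nonneg fun i _ => sum_nonneg fun j _ => mul_nonneg (mul_nonneg (hw i) (hw j))
    (intervalIntegral.integral_nonneg (sq_nonneg _) fun u _ => hφ0 u)

variable [InnerProductSpace ℝ E]

lemma norm_sub_sq_sub_add_norm_add_sq (a b a' b' : E) :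
    ‖a' - b'‖ ^ 2 - ‖a - b‖ ^ 2 + ‖(a' - a) + (b' - b)‖ ^ 2 =
      2 * ⟪a' - b, a' - a⟫ + 2 * ⟪b' - a, b' - b⟫ := by
  rw [show a' - b' = (a - b) + ((a' - a) - (b' - b)) by abel,
    show a' - b = (a - b) + (a' - a) by abel, show b' - a = (b' - b) - (a - b) by abel]
  generalize a - b = d; generalize a' - a = p; generalize b' - b = q
  simp only [norm_add_sq_real, norm_sub_sq_real, inner_add_left, inner_sub_left,
    inner_sub_right, real_inner_self_eq_norm_sq]
  ring

lemma sum_mul_norm_sub_sq_sub_eq (c : ι → ι → ℝ) (hc : ∀ i j, c i j = c j i) {x x' : ι → E}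
    (hmean : ∀ i, ∑ j, c i j • (x' i - x j) = 0) :
    ∑ i, ∑ j, c i j * (‖x' i - x' j‖ ^ 2 - ‖x i - x j‖ ^ 2) =
      -∑ i, ∑ j, c i j * ‖(x' i - x i) + (x' j - x j)‖ ^ 2 := by
  have hzero : ∀ i, ∑ j, c i j * ⟪x' i - x j, x' i - x i⟫ = 0 := fun i => by
    simp_rw [← real_inner_smul_left, ← sum_inner, hmean i, inner_zero_left]
  have hpair : ∀ i j, c i j * (‖x' i - x' j‖ ^ 2 - ‖x i - x j‖ ^ 2) =
      2 * (c i j * ⟪x' i - x j, x' i - x i⟫) + 2 * (c j i * ⟪x' j - x i, x' j - x j⟫) -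
        c i j * ‖(x' i - x i) + (x' j - x j)‖ ^ 2 := fun i j => by
    rw [← hc i j]
    linear_combination c i j * norm_sub_sq_sub_add_norm_add_sq (x i) (x j) (x' i) (x' j)
  simp only [hpair, sum_sub_distrib, sum_add_distrib, ← mul_sum]
  rw [sum_comm (f := fun i j => c j i * ⟪x' j - x i, x' j - x j⟫)]
  simp [hzero]

lemma pairEnergy_add_le {φ : ℝ → ℝ} {w : ι → ℝ} (hφ : Antitone φ) (hφ0 : ∀ s, 0 ≤ φ s)
    (hw : ∀ i, 0 ≤ w i) {x x' : ι → E}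
    (hmean : ∀ i, ∑ j, (w j * φ (‖x i - x j‖ ^ 2)) • (x' i - x j) = 0) :
    pairEnergy φ w x' + 4 * φ 0 * ∑ i, w i ^ 2 * ‖x' i - x i‖ ^ 2 ≤ pairEnergy φ w x := by
  set c : ι → ι → ℝ := fun i j => w i * w j * φ (‖x i - x j‖ ^ 2)
  have hc0 : ∀ i j, 0 ≤ c i j := fun i j => mul_nonneg (mul_nonneg (hw i) (hw j)) (hφ0 _)
  have hconcave : pairEnergy φ w x' - pairEnergy φ w x ≤
      ∑ i, ∑ j, c i j * (‖x' i - x' j‖ ^ 2 - ‖x i - x j‖ ^ 2) := by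
    simp only [pairEnergy, ← sum_sub_distrib, ← mul_sub]
    refine sum_le_sum fun i _ => sum_le_sum fun j _ => ?_
    rw [intervalIntegral.integral_interval_sub_left hφ.intervalIntegrable hφ.intervalIntegrable]
    simp only [c, mul_assoc]
    exact mul_le_mul_of_nonneg_left (mul_le_mul_of_nonneg_left
      (intervalIntegral_le_mul_sub_of_antitone hφ _ _) (hw j)) (hw i)
  have hidentity := sum_mul_norm_sub_sq_sub_eq c (x := x) (x' := x')
    (fun i j => by simp only [c, norm_sub_rev (x i), mul_comm (w i)]) fun i => by
      rw [← smul_zero (w i), ← hmean i, smul_sum]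
      simp only [c, smul_smul, mul_assoc]
  have hdiag : 4 * φ 0 * ∑ i, w i ^ 2 * ‖x' i - x i‖ ^ 2 ≤
      ∑ i, ∑ j, c i j * ‖(x' i - x i) + (x' j - x j)‖ ^ 2 := by
    rw [mul_sum]
    refine sum_le_sum fun i _ => le_of_eq_of_le ?_
      (single_le_sum (fun j _ => mul_nonneg (hc0 i j) (sq_nonneg _)) (mem_univ i))
    rw [← two_smul ℝ (x' i - x i), norm_smul]
    simp [c]
    ring
  linarith

end Energy

section MeanShift

variable {ι E : Type*} [Fintype ι] [AddCommGroup E] {f : E → ℝ} {w : ι → ℝ}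

lemma sum_meanShift_denom_pos (hf : ∀ u, 0 ≤ f u) (hf0 : 0 < f 0) (hw : ∀ j, 0 < w j)
    (x : ι → E) (i : ι) : 0 < ∑ k, f (x i - x k) * w k :=
  (by simpa using mul_pos hf0 (hw i) : 0 < f (x i - x i) * w i).trans_le
    (single_le_sum (f := fun k => f (x i - x k) * w k)
      (fun k _ => mul_nonneg (hf _) (hw k).le) (mem_univ i))

variable (f w) in
noncomputable def meanShiftMatrix (x : ι → E) : Matrix ι ι ℝ :=
  Matrix.of fun i j => f (x i - x j) * w j / ∑ k, f (x i - x k) * w k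

lemma isTypeSymmetricStochastic_meanShiftMatrix [DecidableEq ι] (hf : ∀ u, 0 ≤ f u ∧ f u ≤ 1)
    (hf0 : f 0 = 1) (hfneg : ∀ u, f (-u) = f u) (hw : ∀ j, 0 < w j) {ε : ℝ} (hε : 0 < ε)
    (hwε : ∀ j, ε * ∑ k, w k ≤ w j) (x : ι → E) :
    (meanShiftMatrix f w x).IsTypeSymmetricStochastic ε (ε⁻¹ ^ 2) := by
  set D : ι → ℝ := fun i => ∑ k, f (x i - x k) * w k
  set W := ∑ k, w k
  have hD : ∀ i, 0 < D i :=
    sum_meanShift_denom_pos (fun u => (hf u).1) (hf0 ▸ one_pos) hw x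
  have hwD : ∀ i, w i ≤ D i := fun i => by
    simpa [hf0] using single_le_sum (f := fun k => f (x i - x k) * w k)
      (fun k _ => mul_nonneg (hf _).1 (hw k).le) (mem_univ i)
  have hDW : ∀ i, D i ≤ W := fun i =>
    sum_le_sum fun k _ => mul_le_of_le_one_left (hw k).le (hf _).2
  have hwW : ∀ i, w i ≤ W := fun i => single_le_sum (fun k _ => (hw k).le) (mem_univ i)
  have hW : 0 ≤ W := sum_nonneg fun k _ => (hw k).le
  refine ⟨mem_rowStochastic_iff_sum.2 ⟨fun i j => ?_, fun i => ?_⟩, fun i => ?_, fun i j => ?_⟩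
  · exact div_nonneg (mul_nonneg (hf _).1 (hw j).le) (hD i).le
  · simp only [meanShiftMatrix, of_apply, ← sum_div]
    exact div_self (hD i).ne'
  · simp only [meanShiftMatrix, of_apply, sub_self, hf0, one_mul]
    rw [le_div_iff₀ (hD i)]
    exact (mul_le_mul_of_nonneg_left (hDW i) hε.le).trans (hwε i)
  · have hweights : w i * D i ≤ ε⁻¹ ^ 2 * (w j * D j) :=
      calc w i * D i ≤ W * W := mul_le_mul (hwW i) (hDW i) (hD i).le hW
        _ = ε⁻¹ ^ 2 * ((ε * W) * (ε * W)) := by field_simp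
        _ ≤ ε⁻¹ ^ 2 * (w j * D j) := mul_le_mul_of_nonneg_left
            (mul_le_mul (hwε j) ((hwε j).trans (hwD j)) (mul_nonneg hε.le hW) (hw j).le)
            (by positivity)
    have hF := (hf (x i - x j)).1
    change f (x j - x i) * w i / D j ≤ ε⁻¹ ^ 2 * (f (x i - x j) * w j / D i)
    rw [← neg_sub, hfneg]
    have := hD i; have := hD j
    calc f (x i - x j) * w i / D j = f (x i - x j) * (w i * D i) / (D i * D j) := by
          field_simp
      _ ≤ f (x i - x j) * (ε⁻¹ ^ 2 * (w j * D j)) / (D i * D j) := by gcongr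
      _ = ε⁻¹ ^ 2 * (f (x i - x j) * w j / D i) := by field_simp

variable [Module ℝ E]

variable (f w) in
noncomputable def meanShift (x : ι → E) (i : ι) : E :=
  (∑ k, f (x i - x k) * w k)⁻¹ • ∑ j, (f (x i - x j) * w j) • x j

lemma meanShift_eq_sum_smul (x : ι → E) (i : ι) :
    meanShift f w x i = ∑ j, meanShiftMatrix f w x i j • x j := by
  simp only [meanShift, meanShiftMatrix, of_apply, div_eq_inv_mul, mul_smul, smul_sum]

lemma sum_smul_meanShift_sub_eq_zero {x : ι → E} {i : ι} (hD : ∑ k, f (x i - x k) * w k ≠ 0) :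
    ∑ j, (f (x i - x j) * w j) • (meanShift f w x i - x j) = 0 := by
  simp only [smul_sub]
  rw [sum_sub_distrib, ← sum_smul, meanShift, smul_smul, mul_inv_cancel₀ hD, one_smul, sub_self]

end MeanShift

theorem tendsto_meanShift_sub_nhds_zero {ι E : Type*} [Fintype ι] [NormedAddCommGroup E]
    [InnerProductSpace ℝ E] {f : E → ℝ} {φ : ℝ → ℝ} (hφ : Antitone φ) (hφ0 : ∀ s, 0 ≤ φ s)
    (hφpos : 0 < φ 0) (hfφ : ∀ u, f u = φ (‖u‖ ^ 2)) {w : ι → ℝ} (hw : ∀ j, 0 < w j)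
    {x : ℕ → ι → E} (hx : ∀ t, x (t + 1) = meanShift f w (x t)) (i : ι) :
    Tendsto (fun t => x (t + 1) i - x t i) atTop (𝓝 0) := by
  have hf : ∀ u, 0 ≤ f u := fun u => hfφ u ▸ hφ0 _
  have hf0 : 0 < f 0 := by simpa [hfφ] using hφpos
  set C := 4 * φ 0 * w i ^ 2
  have hC : 0 < C := by have := hw i; positivity
  have hdescent : ∀ t, pairEnergy φ w (x (t + 1)) + C * ‖x (t + 1) i - x t i‖ ^ 2 ≤
      pairEnergy φ w (x t) := fun t => by
    refine le_trans ?_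
      (pairEnergy_add_le hφ hφ0 (fun j => (hw j).le) (x' := x (t + 1)) fun i' => ?_)
    · rw [mul_assoc]
      gcongr
      exact single_le_sum (f := fun k => w k ^ 2 * ‖x (t + 1) k - x t k‖ ^ 2)
        (fun k _ => by positivity) (mem_univ i)
    · simpa only [hx t, hfφ, mul_comm (w _)] using
        sum_smul_meanShift_sub_eq_zero (sum_meanShift_denom_pos hf hf0 hw (x t) i').ne'
  have hsq := tendsto_nhds_zero_of_add_le
    (fun t => pairEnergy_nonneg hφ0 (fun j => (hw j).le) (x t)) (fun t => by positivity) hdescent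
  refine tendsto_zero_iff_norm_tendsto_zero.2 ?_
  have h := (hsq.div_const C).sqrt
  simp only [zero_div, Real.sqrt_zero] at h
  refine h.congr fun t => ?_
  rw [mul_div_cancel_left₀ _ hC.ne', Real.sqrt_sq (norm_nonneg _)]

lemma exists_antitone_comp_norm_sq {E : Type*} [SeminormedAddCommGroup E] {f : E → ℝ}
    {g : ℝ → ℝ} (hf : ∀ u, 0 ≤ f u) (hradial : ∀ u, f u = g ‖u‖)
    (hmono : ∀ r s : ℝ, 0 ≤ r → r ≤ s → g s ≤ g r) :
    ∃ φ : ℝ → ℝ, Antitone φ ∧ (∀ s, 0 ≤ φ s) ∧ ∀ u, f u = φ (‖u‖ ^ 2) :=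
  -- `max · 0` only matters at radii that are not norms, e.g. for the zero space
  ⟨fun s => max (g √s) 0,
    fun s s' h => max_le_max (hmono _ _ (Real.sqrt_nonneg s) (Real.sqrt_le_sqrt h)) le_rfl,
    fun s => le_max_right _ _,
    fun u => by simp only [Real.sqrt_sq (norm_nonneg u), ← hradial, max_eq_left (hf u)]⟩

theorem stmt_6 (p N : ℕ) (f : EuclideanSpace ℝ (Fin p) → ℝ) (g : ℝ → ℝ)
    (hf01 : ∀ u, 0 ≤ f u ∧ f u ≤ 1) (hf1 : ∀ u, f u = 1 ↔ u = 0)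
    (hradial : ∀ u, f u = g ‖u‖) (hmono : ∀ r s : ℝ, 0 ≤ r → r ≤ s → g s ≤ g r)
    (w : Fin N → ℝ) (hw : ∀ j, 0 < w j)
    (x : ℕ → Fin N → EuclideanSpace ℝ (Fin p))
    (hupd : ∀ t i, x (t + 1) i =
      (∑ k, f (x t i - x t k) * w k)⁻¹ • ∑ j, (f (x t i - x t j) * w j) • x t j) :
    ∀ i, ∃ xstar : EuclideanSpace ℝ (Fin p),
      Tendsto (fun t => x t i) atTop (nhds xstar) := by
  intro i
  have hx : ∀ t, x (t + 1) = meanShift f w (x t) := fun t => funext (hupd t)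
  have hf0 : f 0 = 1 := (hf1 0).2 rfl
  obtain ⟨φ, hφ, hφ0, hfφ⟩ := exists_antitone_comp_norm_sq (fun u => (hf01 u).1) hradial hmono
  have hφpos : 0 < φ 0 := by simpa [hf0] using (hfφ 0).symm.trans_gt (hf0 ▸ one_pos)
  have hstep := tendsto_meanShift_sub_nhds_zero hφ hφ0 hφpos hfφ hw hx i
  obtain ⟨jmin, -, hjmin⟩ := exists_min_image univ w ⟨i, mem_univ i⟩
  have hW : 0 < ∑ k, w k := sum_pos (fun k _ => hw k) ⟨i, mem_univ i⟩
  have hε : 0 < w jmin / ∑ k, w k := div_pos (hw jmin) hW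
  have hA := fun t => isTypeSymmetricStochastic_meanShiftMatrix hf01 hf0
    (fun u => by rw [hradial, hradial, norm_neg]) hw hε
    (fun j => by rw [div_mul_cancel₀ _ hW.ne']; exact hjmin j (mem_univ j)) (x t)
  have hcoord : ∀ l, ∃ c, Tendsto (fun t => x t i l) atTop (𝓝 c) := fun l =>
    exists_tendsto_of_isTypeSymmetricStochastic hε hA (y := fun t j => x t j l)
      (fun t => funext fun j => by simp [hx t, meanShift_eq_sum_smul, mulVec, dotProduct]) i
      (by simpa [Function.comp_def] using
        ((EuclideanSpace.proj l).continuous.tendsto 0).comp hstep)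
  choose c hc using hcoord
  refine ⟨(EuclideanSpace.equiv (Fin p) ℝ).symm c, ?_⟩
  simpa [Function.comp_def] using
    ((EuclideanSpace.equiv (Fin p) ℝ).symm.continuous.tendsto c).comp (tendsto_pi_nhds.2 hc)
end

section
/- If f is PDD and f(r_M) > 0 where r_M = max_{i,j} ‖x_i - x_j‖ is the initial data diameter, then all points in the blurring mean-shift process converge to a single common limit: there exists c ∈ ℝ^p with lim_{t→∞} x_i^{(t)} = c for all i. -/
open Filter

lemma key_combo {p N : ℕ} (y : Fin N → EuclideanSpace ℝ (Fin p)) (a b : Fin N → ℝ)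
    (ha : ∀ m, 0 ≤ a m) (hb : ∀ m, 0 ≤ b m) (s : ℝ)
    (hsa : ∑ m, a m = s) (hsb : ∑ m, b m = s)
    (D : ℝ) (hy : ∀ m n, ‖y m - y n‖ ≤ D) :
    ‖(∑ m, a m • y m) - ∑ m, b m • y m‖ ≤ s * D := by
  have hs0 : 0 ≤ s := hsa ▸ Finset.sum_nonneg fun m _ => ha m
  rcases eq_or_lt_of_le hs0 with hs | hs
  · have ha0 := (Finset.sum_eq_zero_iff_of_nonneg (fun m _ => ha m)).1 (hsa.trans hs.symm)
    have hb0 := (Finset.sum_eq_zero_iff_of_nonneg (fun m _ => hb m)).1 (hsb.trans hs.symm)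
    rw [Finset.sum_eq_zero (fun m hm => by rw [ha0 m hm, zero_smul]),
      Finset.sum_eq_zero (fun m hm => by rw [hb0 m hm, zero_smul]), sub_zero, norm_zero, ← hs,
      zero_mul]
  · have hkey : s • ((∑ m, a m • y m) - ∑ m, b m • y m)
        = ∑ m, ∑ n, (a m * b n) • (y m - y n) := by
      have h1 : ∑ m, ∑ n, (a m * b n) • y m = s • ∑ m, a m • y m := by
        rw [Finset.smul_sum]
        refine Finset.sum_congr rfl fun m _ => ?_
        rw [← Finset.sum_smul, ← Finset.mul_sum, hsb, smul_smul, mul_comm]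
      have h2 : ∑ m, ∑ n, (a m * b n) • y n = s • ∑ m, b m • y m := by
        rw [Finset.sum_comm, Finset.smul_sum]
        refine Finset.sum_congr rfl fun n _ => ?_
        rw [← Finset.sum_smul, ← Finset.sum_mul, hsa, smul_smul]
      rw [smul_sub, ← h1, ← h2, ← Finset.sum_sub_distrib]
      refine Finset.sum_congr rfl fun m _ => ?_
      rw [← Finset.sum_sub_distrib]
      exact Finset.sum_congr rfl fun n _ => (smul_sub _ _ _).symm
    have hnormbd : ‖s • ((∑ m, a m • y m) - ∑ m, b m • y m)‖ ≤ s * (s * D) := by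
      rw [hkey]
      calc ‖∑ m, ∑ n, (a m * b n) • (y m - y n)‖
          ≤ ∑ m, ∑ n, ‖(a m * b n) • (y m - y n)‖ := by
            refine (norm_sum_le _ _).trans ?_
            exact Finset.sum_le_sum fun m _ => norm_sum_le _ _
        _ ≤ ∑ m, ∑ n, a m * b n * D := by
            refine Finset.sum_le_sum fun m _ => Finset.sum_le_sum fun n _ => ?_
            rw [norm_smul, Real.norm_of_nonneg (mul_nonneg (ha m) (hb n))]
            exact mul_le_mul_of_nonneg_left (hy m n) (mul_nonneg (ha m) (hb n))
        _ = s * (s * D) := by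
            simp only [← Finset.sum_mul, ← Finset.mul_sum, hsb]
            rw [hsa]
            ring
    rw [norm_smul, Real.norm_of_nonneg hs0] at hnormbd
    exact le_of_mul_le_mul_left hnormbd hs

theorem stmt_7 (p N : ℕ) (f : EuclideanSpace ℝ (Fin p) → ℝ) (g : ℝ → ℝ)
    (hf01 : ∀ u, 0 ≤ f u ∧ f u ≤ 1) (hf1 : ∀ u, f u = 1 ↔ u = 0)
    (hradial : ∀ u, f u = g ‖u‖) (hmono : ∀ r s : ℝ, 0 ≤ r → r ≤ s → g s ≤ g r)
    (w : Fin N → ℝ) (hw : ∀ j, 0 < w j)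
    (x : ℕ → Fin N → EuclideanSpace ℝ (Fin p))
    (hupd : ∀ t i, x (t + 1) i =
      (∑ k, f (x t i - x t k) * w k)⁻¹ • ∑ j, (f (x t i - x t j) * w j) • x t j)
    (rM : ℝ) (hrM : ∀ i j, ‖x 0 i - x 0 j‖ ≤ rM)
    (hrM_att : ∃ i j, rM = ‖x 0 i - x 0 j‖) (hgrM : 0 < g rM) :
    ∃ c : EuclideanSpace ℝ (Fin p), ∀ i,
      Tendsto (fun t => x t i) atTop (nhds c) := by
  obtain ⟨i0, j0, hatt⟩ := hrM_att
  haveI : Nonempty (Fin N) := ⟨i0⟩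
  have hrM0 : 0 ≤ rM := hatt ▸ norm_nonneg _
  have hc0le1 : g rM ≤ 1 := by
    rw [hatt, ← hradial]
    exact (hf01 _).2
  have hq0 : 0 ≤ 1 - g rM := by linarith
  have hq1 : 1 - g rM < 1 := by linarith
  have hflb : ∀ u : EuclideanSpace ℝ (Fin p), ‖u‖ ≤ rM → g rM ≤ f u := fun u h => by
    rw [hradial]; exact hmono _ _ (norm_nonneg u) h
  have hWpos : 0 < ∑ k, w k := Finset.sum_pos (fun k _ => hw k) Finset.univ_nonempty
  -- the one-step contraction and movement bounds
  have step : ∀ t D, 0 ≤ D → D ≤ rM → (∀ i j, ‖x t i - x t j‖ ≤ D) →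
      (∀ i j, ‖x (t+1) i - x (t+1) j‖ ≤ (1 - g rM) * D) ∧
      (∀ i, ‖x (t+1) i - x t i‖ ≤ D) := by
    intro t D hD0 hDr hdist
    set S : Fin N → ℝ := fun i => ∑ k, f (x t i - x t k) * w k with hSdef
    have hSpos : ∀ i, 0 < S i := fun i =>
      Finset.sum_pos (fun k _ => mul_pos
        (lt_of_lt_of_le hgrM (hflb _ ((hdist i k).trans hDr))) (hw k)) Finset.univ_nonempty
    have hSle : ∀ i, S i ≤ ∑ k, w k := fun i =>
      Finset.sum_le_sum fun k _ => mul_le_of_le_one_left (hw k).le (hf01 _).2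
    set A : Fin N → Fin N → ℝ := fun i m => (S i)⁻¹ * (f (x t i - x t m) * w m) with hAdef
    have hAnn : ∀ i m, 0 ≤ A i m := fun i m =>
      mul_nonneg (inv_nonneg.2 (hSpos i).le) (mul_nonneg (hf01 _).1 (hw m).le)
    have hAsum : ∀ i, ∑ m, A i m = 1 := fun i => by
      rw [← Finset.mul_sum]; exact inv_mul_cancel₀ (hSpos i).ne'
    set eps : Fin N → ℝ := fun m => g rM * (w m / ∑ k, w k) with hepsdef
    have hepssum : ∑ m, eps m = g rM := by
      rw [← Finset.mul_sum, ← Finset.sum_div, div_self hWpos.ne', mul_one]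
    have hepsle : ∀ i m, eps m ≤ A i m := by
      intro i m
      have h1 : g rM ≤ f (x t i - x t m) := hflb _ ((hdist i m).trans hDr)
      have h2 : g rM * w m / (∑ k, w k) ≤ f (x t i - x t m) * w m / S i := by
        rw [div_le_div_iff₀ hWpos (hSpos i)]
        have hA : g rM * w m * S i ≤ g rM * w m * ∑ k, w k :=
          mul_le_mul_of_nonneg_left (hSle i) (mul_nonneg hgrM.le (hw m).le)
        have hB : g rM * w m * (∑ k, w k) ≤ f (x t i - x t m) * w m * ∑ k, w k :=
          mul_le_mul_of_nonneg_right (mul_le_mul_of_nonneg_right h1 (hw m).le) hWpos.le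
        linarith
      calc eps m = g rM * w m / ∑ k, w k := by rw [hepsdef, mul_div_assoc]
        _ ≤ f (x t i - x t m) * w m / S i := h2
        _ = A i m := by simp only [hAdef]; rw [inv_mul_eq_div]
    have hrepr : ∀ i, x (t+1) i = ∑ m, A i m • x t m := by
      intro i
      rw [hupd t i, Finset.smul_sum]
      exact Finset.sum_congr rfl fun m _ => (smul_smul _ _ _)
    constructor
    · intro i j
      have hx : x (t+1) i - x (t+1) j
          = (∑ m, (A i m - eps m) • x t m) - ∑ m, (A j m - eps m) • x t m := by
        rw [hrepr i, hrepr j]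
        simp only [sub_smul, Finset.sum_sub_distrib]
        abel
      rw [hx]
      exact key_combo (x t) (fun m => A i m - eps m) (fun m => A j m - eps m)
        (fun m => sub_nonneg.2 (hepsle i m)) (fun m => sub_nonneg.2 (hepsle j m)) (1 - g rM)
        (by rw [Finset.sum_sub_distrib, hAsum, hepssum])
        (by rw [Finset.sum_sub_distrib, hAsum, hepssum]) D hdist
    · intro i
      have hx : x (t+1) i - x t i = ∑ m, A i m • (x t m - x t i) := by
        rw [hrepr i]
        simp only [smul_sub, Finset.sum_sub_distrib, ← Finset.sum_smul, hAsum, one_smul]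
      rw [hx]
      calc ‖∑ m, A i m • (x t m - x t i)‖ ≤ ∑ m, A i m * D := by
            refine (norm_sum_le _ _).trans (Finset.sum_le_sum fun m _ => ?_)
            rw [norm_smul, Real.norm_of_nonneg (hAnn i m)]
            exact mul_le_mul_of_nonneg_left (hdist m i) (hAnn i m)
        _ = D := by rw [← Finset.sum_mul, hAsum, one_mul]
  have hdiam : ∀ t, ∀ i j, ‖x t i - x t j‖ ≤ (1 - g rM)^t * rM := by
    intro t
    induction t with
    | zero => simpa using hrM
    | succ t ih =>
      have hD0 : 0 ≤ (1 - g rM)^t * rM := mul_nonneg (pow_nonneg hq0 t) hrM0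
      have hDr : (1 - g rM)^t * rM ≤ rM :=
        mul_le_of_le_one_left hrM0 (pow_le_one₀ hq0 (by linarith))
      intro i j
      calc ‖x (t+1) i - x (t+1) j‖ ≤ (1 - g rM) * ((1 - g rM)^t * rM) :=
            (step t _ hD0 hDr ih).1 i j
        _ = (1 - g rM)^(t+1) * rM := by rw [pow_succ]; ring
  have hmove : ∀ i t, dist (x t i) (x (t+1) i) ≤ rM * (1 - g rM)^t := by
    intro i t
    have hD0 : 0 ≤ (1 - g rM)^t * rM := mul_nonneg (pow_nonneg hq0 t) hrM0
    have hDr : (1 - g rM)^t * rM ≤ rM :=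
      mul_le_of_le_one_left hrM0 (pow_le_one₀ hq0 (by linarith))
    have h := (step t _ hD0 hDr (hdiam t)).2 i
    rw [dist_eq_norm, norm_sub_rev]
    linarith [h, (by ring : (1 - g rM)^t * rM = rM * (1 - g rM)^t)]
  have htendD : Tendsto (fun t => (1 - g rM)^t * rM) atTop (nhds 0) := by
    simpa using (tendsto_pow_atTop_nhds_zero_of_lt_one hq0 hq1).mul_const rM
  have hcau : CauchySeq (fun t => x t i0) :=
    cauchySeq_of_le_geometric (1 - g rM) rM hq1 (hmove i0)
  obtain ⟨c, hc⟩ := cauchySeq_tendsto_of_complete hcau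
  refine ⟨c, fun i => ?_⟩
  have hd : Tendsto (fun t => dist (x t i0) (x t i)) atTop (nhds 0) := by
    refine squeeze_zero (fun t => dist_nonneg) (fun t => ?_) htendD
    rw [dist_eq_norm]
    exact hdiam t i0 i
  exact hc.congr_dist hd
end

section
/- For a Gaussian kernel f(u) = exp(-‖u‖²/(2τ²)) and a centered Gaussian distribution G = N(0, Σ) on ℝ^p, the mean-shift map K_G(x) = (∫ f(x-y) y dG(y)) / (∫ f(x-y) dG(y)) equals the linear map (I + τ²Σ^{-1})^{-1} x. -/
/-!
Writing `f = gaussianKernel (τ⁻² • 1)` and `g = gaussianKernel S⁻¹`, completing the square gives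
`f (x - y) * g y = c * gaussianKernel A (y - m)` with `A = τ⁻² • 1 + S⁻¹ = τ⁻² • (1 + τ² • S⁻¹)` and
`A m = τ⁻² • x`, i.e. `m = (1 + τ² • S⁻¹)⁻¹ x`. The weight is thus an even function translated by
`m`, so its barycenter is `m`; since `A ≥ τ⁻² • 1`, it is dominated by a product of one-dimensional
Gaussians, which makes all integrals involved finite.
-/

open MeasureTheory Matrix Real

theorem integral_eq_zero_of_comp_neg_eq_neg {G F : Type*} [MeasurableSpace G] [AddGroup G]
    [MeasurableNeg G] [NormedAddCommGroup F] [NormedSpace ℝ F] {μ : Measure G}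
    [μ.IsNegInvariant] {f : G → F} (hf : ∀ x, f (-x) = -f x) : ∫ x, f x ∂μ = 0 := by
  have : IsAddTorsionFree F := .of_isTorsionFree ℝ F
  simp_rw [← self_eq_neg, ← integral_neg, ← hf, integral_neg_eq_self]

section Barycenter

variable {E : Type*} [NormedAddCommGroup E] [NormedSpace ℝ E] [CompleteSpace E]
  [MeasurableSpace E] [BorelSpace E] {μ : Measure E}

theorem integral_smul_comp_sub_of_even [μ.IsAddRightInvariant] [μ.IsNegInvariant] {h : E → ℝ}
    (heven : ∀ z, h (-z) = h z) (hint : Integrable h μ)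
    (hint_smul : Integrable (fun z ↦ h z • z) μ)
    (m : E) : ∫ y, h (y - m) • y ∂μ = (∫ z, h z ∂μ) • m := by
  have hodd : ∫ z, h z • z ∂μ = 0 :=
    integral_eq_zero_of_comp_neg_eq_neg fun z ↦ by rw [heven, smul_neg]
  calc ∫ y, h (y - m) • y ∂μ = ∫ z, h z • z + h z • m ∂μ := by
        simp_rw [← smul_add, ← integral_add_right_eq_self (μ := μ) (fun y ↦ h (y - m) • y) m,
          add_sub_cancel_right]
    _ = (∫ z, h z ∂μ) • m := by
        rw [integral_add hint_smul (hint.smul_const m), hodd, zero_add, integral_smul_const]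

theorem weighted_mean_comp_sub_of_even [μ.IsAddRightInvariant] [μ.IsNegInvariant] {h : E → ℝ}
    (heven : ∀ z, h (-z) = h z) (hint : Integrable h μ)
    (hint_smul : Integrable (fun z ↦ h z • z) μ)
    (hne : ∫ z, h z ∂μ ≠ 0) {c : ℝ} (hc : c ≠ 0) (m : E) :
    (∫ y, c * h (y - m) ∂μ)⁻¹ • ∫ y, (c * h (y - m)) • y ∂μ = m := by
  simp_rw [mul_smul]
  rw [integral_const_mul, integral_smul, integral_sub_right_eq_self,
    integral_smul_comp_sub_of_even heven hint hint_smul, smul_smul, smul_smul]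
  field_simp
  rw [one_smul]

end Barycenter

theorem Matrix.IsSymm.dotProduct_mulVec_comm {n R : Type*} [Fintype n] [CommSemiring R]
    {A : Matrix n n R} (hA : A.IsSymm) (v w : n → R) : v ⬝ᵥ (A *ᵥ w) = w ⬝ᵥ (A *ᵥ v) := by
  rw [dotProduct_mulVec, ← mulVec_transpose, hA.eq, dotProduct_comm]

section GaussianKernel

variable {ι : Type*} [Fintype ι]

theorem exp_neg_mul_dotProduct_self_eq_prod (b : ℝ) (z : ι → ℝ) :
    rexp (-b * (z ⬝ᵥ z)) = ∏ i, rexp (-b * z i ^ 2) := by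
  simp only [dotProduct, Finset.mul_sum, ← Real.exp_sum, sq]

theorem integrable_exp_neg_mul_dotProduct_self {b : ℝ} (hb : 0 < b) :
    Integrable fun z : ι → ℝ ↦ rexp (-b * (z ⬝ᵥ z)) := by
  simp_rw [exp_neg_mul_dotProduct_self_eq_prod]
  exact Integrable.fintype_prod fun _ ↦ integrable_exp_neg_mul_sq hb

theorem integrable_exp_neg_mul_dotProduct_self_smul {b : ℝ} (hb : 0 < b) :
    Integrable fun z : ι → ℝ ↦ rexp (-b * (z ⬝ᵥ z)) • z := by
  classical
  refine integrable_pi_iff.2 fun i ↦ ?_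
  have hprod : (fun z : ι → ℝ ↦ (rexp (-b * (z ⬝ᵥ z)) • z) i) =
      fun z ↦ ∏ j, (if j = i then z j else 1) * rexp (-b * z j ^ 2) := by
    ext z
    rw [Finset.prod_mul_distrib, Finset.prod_ite_eq', exp_neg_mul_dotProduct_self_eq_prod]
    simp [mul_comm]
  rw [hprod]
  refine Integrable.fintype_prod (f := fun j t ↦ (if j = i then t else 1) * rexp (-b * t ^ 2))
    fun j ↦ ?_
  split_ifs
  · exact integrable_mul_exp_neg_mul_sq hb
  · simpa using integrable_exp_neg_mul_sq hb

noncomputable def gaussianKernel (A : Matrix ι ι ℝ) (z : ι → ℝ) : ℝ :=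
  rexp (-(z ⬝ᵥ (A *ᵥ z)) / 2)

variable {A : Matrix ι ι ℝ}

theorem gaussianKernel_neg (z : ι → ℝ) : gaussianKernel A (-z) = gaussianKernel A z := by
  simp [gaussianKernel, mulVec_neg]

theorem gaussianKernel_pos (z : ι → ℝ) : 0 < gaussianKernel A z :=
  exp_pos _

theorem continuous_gaussianKernel : Continuous (gaussianKernel A) := by
  unfold gaussianKernel
  fun_prop

theorem gaussianKernel_le {b : ℝ} (hA : ∀ z, b * (z ⬝ᵥ z) ≤ z ⬝ᵥ (A *ᵥ z)) (z : ι → ℝ) :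
    gaussianKernel A z ≤ rexp (-(b / 2) * (z ⬝ᵥ z)) := by
  unfold gaussianKernel
  gcongr
  linarith [hA z]

theorem integrable_gaussianKernel {b : ℝ} (hb : 0 < b)
    (hA : ∀ z, b * (z ⬝ᵥ z) ≤ z ⬝ᵥ (A *ᵥ z)) : Integrable (gaussianKernel A) :=
  (integrable_exp_neg_mul_dotProduct_self (half_pos hb)).mono'
    continuous_gaussianKernel.aestronglyMeasurable <| ae_of_all _ fun z ↦ by
      rw [Real.norm_of_nonneg (gaussianKernel_pos z).le]
      exact gaussianKernel_le hA z

theorem integrable_gaussianKernel_smul {b : ℝ} (hb : 0 < b)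
    (hA : ∀ z, b * (z ⬝ᵥ z) ≤ z ⬝ᵥ (A *ᵥ z)) : Integrable fun z ↦ gaussianKernel A z • z :=
  (integrable_exp_neg_mul_dotProduct_self_smul (half_pos hb)).mono
    (continuous_gaussianKernel.smul continuous_id).aestronglyMeasurable <| ae_of_all _ fun z ↦ by
      simp only [norm_smul, Real.norm_of_nonneg (gaussianKernel_pos z).le,
        Real.norm_of_nonneg (exp_pos _).le]
      gcongr
      exact gaussianKernel_le hA z

theorem integral_gaussianKernel_pos {b : ℝ} (hb : 0 < b)
    (hA : ∀ z, b * (z ⬝ᵥ z) ≤ z ⬝ᵥ (A *ᵥ z)) : 0 < ∫ z, gaussianKernel A z :=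
  integral_exp_pos (integrable_gaussianKernel hb hA)

theorem gaussianKernel_sub_mul {P Q : Matrix ι ι ℝ} (hP : P.IsSymm) (hQ : Q.IsSymm)
    {x m : ι → ℝ} (hm : (P + Q) *ᵥ m = P *ᵥ x) (y : ι → ℝ) :
    gaussianKernel P (x - y) * gaussianKernel Q y =
      rexp (-(x ⬝ᵥ (P *ᵥ x) - m ⬝ᵥ ((P + Q) *ᵥ m)) / 2) * gaussianKernel (P + Q) (y - m) := by
  have hPx : x ⬝ᵥ (P *ᵥ y) = y ⬝ᵥ (P *ᵥ x) := hP.dotProduct_mulVec_comm x y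
  have hm' : m ⬝ᵥ ((P + Q) *ᵥ y) = y ⬝ᵥ (P *ᵥ x) := by
    rw [(hP.add hQ).dotProduct_mulVec_comm, hm]
  unfold gaussianKernel
  rw [← Real.exp_add, ← Real.exp_add, mulVec_sub, mulVec_sub, hm]
  simp only [dotProduct_sub, sub_dotProduct, hPx, hm']
  rw [add_mulVec, dotProduct_add]
  ring_nf

end GaussianKernel

theorem stmt_8_general (p : ℕ) (S : Matrix (Fin p) (Fin p) ℝ)
    (hS : S.PosDef) (τ : ℝ) (hτ : 0 < τ)
    (f : (Fin p → ℝ) → ℝ) (hf : ∀ u, f u = Real.exp (-(u ⬝ᵥ u) / (2 * τ ^ 2)))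
    (gdens : (Fin p → ℝ) → ℝ)
    (hg : ∀ y, gdens y = Real.exp (-(y ⬝ᵥ (S⁻¹ *ᵥ y)) / 2))
    (x : Fin p → ℝ) :
    (∫ y, f (x - y) * gdens y)⁻¹ • (∫ y, (f (x - y) * gdens y) • y) =
      ((1 + τ ^ 2 • S⁻¹)⁻¹ : Matrix (Fin p) (Fin p) ℝ) *ᵥ x := by
  set B : Matrix (Fin p) (Fin p) ℝ := 1 + τ ^ 2 • S⁻¹
  set P : Matrix (Fin p) (Fin p) ℝ := (τ ^ 2)⁻¹ • 1
  have hτ2 : τ ^ 2 ≠ 0 := by positivity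
  have hSinv : S⁻¹.PosSemidef := hS.inv.posSemidef
  have hB : B.PosDef := PosDef.one.add_posSemidef (hSinv.smul (sq_nonneg τ))
  have hPS : P + S⁻¹ = (τ ^ 2)⁻¹ • B := by
    rw [smul_add, smul_smul, inv_mul_cancel₀ hτ2, one_smul]
  have hm : (P + S⁻¹) *ᵥ (B⁻¹ *ᵥ x) = P *ᵥ x := by
    rw [hPS, smul_mulVec, mulVec_mulVec, mul_nonsing_inv _ (B.isUnit_iff_isUnit_det.mp hB.isUnit),
      one_mulVec, smul_mulVec, one_mulVec]
  have hbound : ∀ z, (τ ^ 2)⁻¹ * (z ⬝ᵥ z) ≤ z ⬝ᵥ ((P + S⁻¹) *ᵥ z) := fun z ↦ by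
    simpa [P, add_mulVec, smul_mulVec] using hSinv.dotProduct_mulVec_nonneg z
  have hfP (u : Fin p → ℝ) : f u = gaussianKernel P u := by
    rw [hf, gaussianKernel, smul_mulVec, one_mulVec, dotProduct_smul, smul_eq_mul]
    field_simp
  have hgS (y : Fin p → ℝ) : gdens y = gaussianKernel S⁻¹ y := by rw [hg, gaussianKernel]
  have hP : P.IsSymm := isSymm_one.smul _
  have hSinv_symm : S⁻¹.IsSymm := isHermitian_iff_isSymm.mp hS.inv.isHermitian
  simp_rw [hfP, hgS, gaussianKernel_sub_mul hP hSinv_symm hm]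
  have hτ2_inv : 0 < (τ ^ 2)⁻¹ := by positivity
  exact weighted_mean_comp_sub_of_even gaussianKernel_neg
    (integrable_gaussianKernel hτ2_inv hbound) (integrable_gaussianKernel_smul hτ2_inv hbound)
    (integral_gaussianKernel_pos hτ2_inv hbound).ne' (exp_pos _).ne' _

theorem stmt_8 (p : ℕ) (S : Matrix (Fin p) (Fin p) ℝ)
    (hS : S.PosDef) (hSsymm : S.IsSymm) (τ : ℝ) (hτ : 0 < τ)
    (f : (Fin p → ℝ) → ℝ) (hf : ∀ u, f u = Real.exp (-(u ⬝ᵥ u) / (2 * τ ^ 2)))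
    (gdens : (Fin p → ℝ) → ℝ)
    (hg : ∀ y, gdens y = Real.exp (-(y ⬝ᵥ (S⁻¹ *ᵥ y)) / 2))
    (x : Fin p → ℝ) :
    (∫ y, f (x - y) * gdens y)⁻¹ • (∫ y, (f (x - y) * gdens y) • y) =
      ((1 + τ ^ 2 • S⁻¹)⁻¹ : Matrix (Fin p) (Fin p) ℝ) *ᵥ x :=
  stmt_8_general p S hS τ hτ f hf gdens hg x
end

section
/- For the scalar recursion λ^{(s+1)} = (λ^{(s)})³/(λ^{(s)} + τ²)² with λ^{(0)} > 0 and τ > 0, the sequence is nonincreasing, satisfies λ^{(s)} ≤ ( (λ^{(0)})² / (λ^{(0)} + τ²)² )^s λ^{(0)}, and converges to 0 as s → ∞. -/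
open Filter

theorem stmt_10 (τ : ℝ) (hτ : 0 < τ) (lam : ℕ → ℝ) (h0 : 0 < lam 0)
    (hrec : ∀ s, lam (s + 1) = (lam s) ^ 3 / (lam s + τ ^ 2) ^ 2) :
    (∀ s, lam (s + 1) ≤ lam s) ∧
    (∀ s, lam s ≤ ((lam 0) ^ 2 / (lam 0 + τ ^ 2) ^ 2) ^ s * lam 0) ∧
    Tendsto lam atTop (nhds 0) := by
  have hτ2 : 0 < τ ^ 2 := by positivity
  have hpos : ∀ s, 0 < lam s := by
    intro s
    induction s with
    | zero => exact h0
    | succ n ih =>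
      rw [hrec n]
      positivity
  have hmono : ∀ s, lam (s + 1) ≤ lam s := by
    intro s
    rw [hrec s]
    have hp := hpos s
    have hden : 0 < (lam s + τ ^ 2) ^ 2 := by positivity
    rw [div_le_iff₀ hden]
    nlinarith [mul_pos (mul_pos hp hp) hτ2, mul_pos hp (mul_pos hτ2 hτ2)]
  set r := (lam 0) ^ 2 / (lam 0 + τ ^ 2) ^ 2 with hr
  have hd0 : 0 < (lam 0 + τ ^ 2) ^ 2 := by positivity
  have hr0 : 0 ≤ r := by positivity
  have hr1 : r < 1 := by
    rw [hr, div_lt_one hd0]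
    nlinarith
  have hle0 : ∀ s, lam s ≤ lam 0 := by
    intro s
    induction s with
    | zero => exact le_refl _
    | succ n ih => exact le_trans (hmono n) ih
  have hbound : ∀ s, lam s ≤ r ^ s * lam 0 := by
    intro s
    induction s with
    | zero => simp
    | succ n ih =>
      rw [hrec n]
      have hp := hpos n
      have hdn : 0 < (lam n + τ ^ 2) ^ 2 := by positivity
      have h1 : lam n ≤ lam 0 := hle0 n
      have hlin : lam n * (lam 0 + τ ^ 2) ≤ lam 0 * (lam n + τ ^ 2) := by nlinarith
      have hsq : (lam n * (lam 0 + τ ^ 2)) ^ 2 ≤ (lam 0 * (lam n + τ ^ 2)) ^ 2 :=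
        pow_le_pow_left₀ (by positivity) hlin 2
      have hratio : (lam n) ^ 2 / (lam n + τ ^ 2) ^ 2 ≤ r := by
        rw [hr, div_le_div_iff₀ hdn hd0]
        nlinarith [hsq]
      have key : (lam n) ^ 3 / (lam n + τ ^ 2) ^ 2 ≤ r * lam n := by
        have : (lam n) ^ 3 / (lam n + τ ^ 2) ^ 2
            = ((lam n) ^ 2 / (lam n + τ ^ 2) ^ 2) * lam n := by ring
        rw [this]
        exact mul_le_mul_of_nonneg_right hratio hp.le
      calc (lam n) ^ 3 / (lam n + τ ^ 2) ^ 2 ≤ r * lam n := key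
        _ ≤ r * (r ^ n * lam 0) := mul_le_mul_of_nonneg_left ih hr0
        _ = r ^ (n + 1) * lam 0 := by ring
  refine ⟨hmono, hbound, ?_⟩
  have htend : Tendsto (fun s => r ^ s * lam 0) atTop (nhds 0) := by
    have := tendsto_pow_atTop_nhds_zero_of_lt_one hr0 hr1
    simpa using this.mul_const (lam 0)
  exact squeeze_zero (fun s => (hpos s).le) hbound htend
end

section
/- For one-dimensional Gaussian blurring mean-shift with variance recursion σ_{s+1} = σ_s · σ_s²/(σ_s² + τ²), and nonblurring recursion σ'_{s+1} = σ'_s · σ_0²/(σ_0² + τ²) with σ'_0 = σ_0, one has σ_s ≤ σ'_s for all s, with strict inequality for s ≥ 2 (assuming σ_0, τ > 0). In particular the blurring process shrinks at least as fast as the nonblurring one. -/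
/-!
Both recursions multiply by a shrink factor `x² / (x² + τ²)`, evaluated at the current width
`σ_s` for the blurring process and frozen at `σ₀` for the nonblurring one. The factor is
increasing in `x ≥ 0` and below `1`, so `σ_s` strictly decreases from `σ₀`; hence the blurring
factor never exceeds the frozen one, and is strictly smaller from step `1` on.
-/

noncomputable def shrinkFactor (τ x : ℝ) : ℝ := x ^ 2 / (x ^ 2 + τ ^ 2)

section ShrinkFactor

variable {τ x y : ℝ}

lemma shrinkFactor_nonneg : 0 ≤ shrinkFactor τ x := by
  unfold shrinkFactor; positivity

lemma shrinkFactor_lt_one (hτ : τ ≠ 0) : shrinkFactor τ x < 1 := by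
  have : 0 < τ ^ 2 := by positivity
  unfold shrinkFactor
  rw [div_lt_one (by positivity)]
  linarith

lemma shrinkFactor_le_shrinkFactor (hx : 0 ≤ x) (hxy : x ≤ y) :
    shrinkFactor τ x ≤ shrinkFactor τ y := by
  rcases hx.eq_or_lt with rfl | hx
  · simpa [shrinkFactor] using shrinkFactor_nonneg (τ := τ) (x := y)
  have hy : 0 < y := hx.trans_le hxy
  have hsq : x ^ 2 ≤ y ^ 2 := pow_le_pow_left₀ hx.le hxy 2
  unfold shrinkFactor
  rw [div_le_div_iff₀ (by positivity) (by positivity)]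
  nlinarith [mul_le_mul_of_nonneg_right hsq (sq_nonneg τ)]

lemma shrinkFactor_lt_shrinkFactor (hτ : τ ≠ 0) (hx : 0 ≤ x) (hxy : x < y) :
    shrinkFactor τ x < shrinkFactor τ y := by
  have hsq : x ^ 2 < y ^ 2 := pow_lt_pow_left₀ hxy hx two_ne_zero
  have hτ2 : 0 < τ ^ 2 := by positivity
  unfold shrinkFactor
  rw [div_lt_div_iff₀ (by positivity) (by positivity)]
  nlinarith [mul_lt_mul_of_pos_right hsq hτ2]

end ShrinkFactor

section Blurring

variable {τ : ℝ} {σ : ℕ → ℝ}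

lemma blurring_pos (hrec : ∀ s, σ (s + 1) = σ s * shrinkFactor τ (σ s)) (h0 : 0 < σ 0)
    (s : ℕ) : 0 < σ s := by
  induction s with
  | zero => exact h0
  | succ n ih =>
    rw [hrec]
    have : shrinkFactor τ (σ n) ≠ 0 := by unfold shrinkFactor; positivity
    exact mul_pos ih (shrinkFactor_nonneg.lt_of_ne' this)

lemma blurring_strictAnti (hτ : τ ≠ 0) (hrec : ∀ s, σ (s + 1) = σ s * shrinkFactor τ (σ s))
    (h0 : 0 < σ 0) : StrictAnti σ :=
  strictAnti_nat_of_succ_lt fun s => by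
    rw [hrec]
    exact mul_lt_of_lt_one_right (blurring_pos hrec h0 s) (shrinkFactor_lt_one hτ)

end Blurring

section Step

variable {τ x y z : ℝ}

lemma mul_shrinkFactor_le (hx : 0 ≤ x) (hxy : x ≤ y) (hxz : x ≤ z) :
    x * shrinkFactor τ x ≤ y * shrinkFactor τ z :=
  calc x * shrinkFactor τ x ≤ x * shrinkFactor τ z :=
        mul_le_mul_of_nonneg_left (shrinkFactor_le_shrinkFactor hx hxz) hx
    _ ≤ y * shrinkFactor τ z := mul_le_mul_of_nonneg_right hxy shrinkFactor_nonneg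

lemma mul_shrinkFactor_lt (hτ : τ ≠ 0) (hx : 0 < x) (hxy : x ≤ y) (hxz : x < z) :
    x * shrinkFactor τ x < y * shrinkFactor τ z :=
  calc x * shrinkFactor τ x < x * shrinkFactor τ z :=
        mul_lt_mul_of_pos_left (shrinkFactor_lt_shrinkFactor hτ hx.le hxz) hx
    _ ≤ y * shrinkFactor τ z := mul_le_mul_of_nonneg_right hxy shrinkFactor_nonneg

end Step

theorem stmt_11 (τ σ₀ : ℝ) (hτ : 0 < τ) (hσ₀ : 0 < σ₀)
    (σ σ' : ℕ → ℝ) (h0 : σ 0 = σ₀) (h0' : σ' 0 = σ₀)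
    (hrec : ∀ s, σ (s + 1) = (σ s) ^ 3 / ((σ s) ^ 2 + τ ^ 2))
    (hrec' : ∀ s, σ' (s + 1) = σ' s * (σ₀ ^ 2 / (σ₀ ^ 2 + τ ^ 2))) :
    (∀ s, σ s ≤ σ' s) ∧ (∀ s, 2 ≤ s → σ s < σ' s) := by
  have hblur : ∀ s, σ (s + 1) = σ s * shrinkFactor τ (σ s) := fun s => by
    rw [hrec, shrinkFactor, mul_div_assoc', ← pow_succ']
  have hpos := blurring_pos hblur (h0 ▸ hσ₀)
  have hanti := blurring_strictAnti hτ.ne' hblur (h0 ▸ hσ₀)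
  have hle : ∀ s, σ s ≤ σ' s := fun s => by
    induction s with
    | zero => rw [h0, h0']
    | succ n ih =>
      rw [hblur, hrec']
      exact mul_shrinkFactor_le (hpos n).le ih (h0 ▸ hanti.antitone n.zero_le)
  refine ⟨hle, fun s hs => ?_⟩
  obtain ⟨n, rfl⟩ : ∃ n, s = n + 1 := ⟨s - 1, by omega⟩
  rw [hblur, hrec']
  exact mul_shrinkFactor_lt hτ.ne' (hpos n) (hle n) (h0 ▸ hanti (by omega))
end

section
/- Vertex attainment lemma: if a sequence of polytopes C^{(t)} = conv{x_1^{(t)},...,x_N^{(t)}} is nested decreasing with intersection C, then for every extreme point v of C there exist an index j and a subsequence t_n such that x_j^{(t_n)} → v. -/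
/-!
Write `v` as a convex combination of the vertices `x t`. Along a subsequence the weights converge
in the (compact) standard simplex and every vertex converges in the compact polytope `C⁽⁰⁾`; the
limit vertices lie in every closed `C⁽ᵗ⁾`, hence in `C`, and `v` is the same convex combination
of them. An extreme point of `C` lying in the convex hull of points of `C` is one of those points.
-/

open Filter Set Topology

theorem convexHull_range_eq_image_stdSimplex {R E ι : Type*} [Field R] [LinearOrder R]
    [IsStrictOrderedRing R] [AddCommGroup E] [Module R E] [Fintype ι] (f : ι → E) :
    convexHull R (range f) = (fun w : ι → R => ∑ i, w i • f i) '' stdSimplex R ι := by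
  classical
  change _ = Fintype.linearCombination R f '' _
  rw [← convexHull_rangle_single_eq_stdSimplex, LinearMap.image_convexHull, ← range_comp]
  simp only [Function.comp_def, Fintype.linearCombination_apply_single, one_smul]

theorem mem_of_mem_extremePoints_of_convexHull_subset {𝕜 E : Type*} [Field 𝕜] [LinearOrder 𝕜]
    [IsStrictOrderedRing 𝕜] [AddCommGroup E] [Module 𝕜 E] {A s : Set E} {v : E}
    (hv : v ∈ extremePoints 𝕜 A) (hsA : convexHull 𝕜 s ⊆ A) (hvs : v ∈ convexHull 𝕜 s) :
    v ∈ s :=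
  extremePoints_convexHull_subset <|
    inter_extremePoints_subset_extremePoints_of_subset hsA ⟨hvs, hv⟩

theorem mem_iInter_of_tendsto_of_antitone {X : Type*} [TopologicalSpace X] {K : ℕ → Set X}
    (hK : Antitone K) (hKc : ∀ t, IsClosed (K t)) {φ : ℕ → ℕ} (hφ : Tendsto φ atTop atTop)
    {z : ℕ → X} (hz : ∀ n, z n ∈ K (φ n)) {y : X} (hy : Tendsto z atTop (𝓝 y)) :
    y ∈ ⋂ t, K t :=
  mem_iInter.2 fun t =>
    (hKc t).mem_of_tendsto hy ((hφ.eventually_ge_atTop t).mono fun n hn => hK hn (hz n))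

theorem exists_subseq_tendsto_of_mem_extremePoints_iInter_convexHull {ι E : Type*} [Fintype ι]
    [TopologicalSpace E] [AddCommGroup E] [Module ℝ E] [IsTopologicalAddGroup E]
    [ContinuousSMul ℝ E] [T2Space E] [FirstCountableTopology E] {x : ℕ → ι → E}
    (hx : Antitone fun t => convexHull ℝ (range (x t))) {v : E}
    (hv : v ∈ extremePoints ℝ (⋂ t, convexHull ℝ (range (x t)))) :
    ∃ (j : ι) (φ : ℕ → ℕ), StrictMono φ ∧ Tendsto (fun n => x (φ n) j) atTop (𝓝 v) := by
  set C := fun t => convexHull ℝ (range (x t))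
  have hC : ∀ t, IsCompact (C t) := fun t => (finite_range (x t)).isCompact_convexHull ℝ
  have hxC : ∀ t i, x t i ∈ C t := fun t i => subset_convexHull ℝ _ (mem_range_self i)
  choose w hw hwv using fun t =>
    (convexHull_range_eq_image_stdSimplex (x t)).subset (mem_iInter.1 hv.1 t)
  obtain ⟨⟨μ, y⟩, ⟨hμ, -⟩, φ, hφ, hlim⟩ :=
    ((isCompact_stdSimplex ℝ ι).prod (isCompact_univ_pi fun _ => hC 0)).tendsto_subseq
      (x := fun t => (w t, x t)) fun t => ⟨hw t, fun i _ => hx (Nat.zero_le t) (hxC t i)⟩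
  have hxy : ∀ i, Tendsto (fun n => x (φ n) i) atTop (𝓝 (y i)) := fun i =>
    ((continuous_apply i).tendsto _).comp ((continuous_snd.tendsto _).comp hlim)
  have hyC : ∀ i, y i ∈ ⋂ t, C t := fun i =>
    mem_iInter_of_tendsto_of_antitone hx (fun t => (hC t).isClosed) hφ.tendsto_atTop
      (fun n => hxC (φ n) i) (hxy i)
  have hμy : ∑ i, μ i • y i = v := by
    have hcont : Continuous fun p : (ι → ℝ) × (ι → E) => ∑ i, p.1 i • p.2 i := by fun_prop
    refine tendsto_nhds_unique ((hcont.tendsto _).comp hlim) ?_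
    simp only [Function.comp_def, hwv, tendsto_const_nhds]
  obtain ⟨j, rfl⟩ : v ∈ range y :=
    mem_of_mem_extremePoints_of_convexHull_subset hv
      (convexHull_min (range_subset_iff.2 hyC) (convex_iInter fun t => convex_convexHull ℝ _))
      ((convexHull_range_eq_image_stdSimplex (R := ℝ) y).symm ▸ ⟨μ, hμ, hμy⟩)
  exact ⟨j, φ, hφ, hxy j⟩

theorem stmt_15 (p N : ℕ) (x : ℕ → Fin N → EuclideanSpace ℝ (Fin p))
    (hnest : ∀ t, convexHull ℝ (Set.range (x (t + 1))) ⊆ convexHull ℝ (Set.range (x t)))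
    (v : EuclideanSpace ℝ (Fin p))
    (hv : v ∈ Set.extremePoints ℝ (⋂ t, convexHull ℝ (Set.range (x t)))) :
    ∃ (j : Fin N) (φ : ℕ → ℕ), StrictMono φ ∧
      Tendsto (fun n => x (φ n) j) atTop (nhds v) :=
  exists_subseq_tendsto_of_mem_extremePoints_iInter_convexHull (antitone_nat_of_succ_le hnest) hv
end
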